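/- arXiv:2311.05901 — 8 statements merged into one kernel-verified Lean document; each statement's English description precedes it below -/
import Mathlib

section
/- For every n ≥ 1, the chromatic number π_n of the n-dimensional permutohedron equals n; that is, the least m for which there exists a proper colouring of the facets of the n-dimensional permutohedron with m colours is exactly n. -/
/-- A facet of the `n`-dimensional permutohedron: a nonempty proper subset of
`[n]₀ = {0,1,...,n}`. -/
def PermFacet (n : ℕ) (X : Finset ℕ) : Prop :=
  X.Nonempty ∧ X ⊂ Finset.range (n + 1)

/-- Two facets of the permutohedron are separated when they are incomparable
with respect to inclusion. -/
def PermSeparated (X Y : Finset ℕ) : Prop :=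
  ¬ X ⊆ Y ∧ ¬ Y ⊆ X

/-- A proper colouring of the facets of the `n`-dimensional permutohedron with
`m` colours: any two distinct facets of the same colour are separated. -/
def IsProperColouringPerm (n m : ℕ) (f : Finset ℕ → ℕ) : Prop :=
  (∀ X, PermFacet n X → f X ∈ Finset.Icc 1 m) ∧
  ∀ X Y, PermFacet n X → PermFacet n Y → X ≠ Y → f X = f Y → PermSeparated X Y

/-! Colouring a facet by its cardinality is proper, since distinct sets of equal size are
incomparable; this uses the `n` colours `1, …, n`. Conversely, the chain of facets
`{0} ⊂ {0,1} ⊂ ⋯ ⊂ {0,…,n-1}` consists of `n` pairwise comparable facets, which must all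
receive different colours. -/

open Finset

lemma permFacet_range {n k : ℕ} (hk : k ≠ 0) (hkn : k ≤ n) : PermFacet n (range k) :=
  ⟨nonempty_range_iff.mpr hk, strictMono_range (Nat.lt_succ_of_le hkn)⟩

lemma permSeparated_of_card_eq {X Y : Finset ℕ} (hXY : X ≠ Y) (hcard : #X = #Y) :
    PermSeparated X Y :=
  ⟨fun h => hXY (eq_of_subset_of_card_le h hcard.ge),
    fun h => hXY (eq_of_subset_of_card_le h hcard.le).symm⟩

lemma isProperColouringPerm_card (n : ℕ) : IsProperColouringPerm n n Finset.card := by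
  refine ⟨fun X ⟨hne, hsub⟩ => mem_Icc.mpr ⟨hne.card_pos, ?_⟩,
    fun X Y _ _ hXY hcard => permSeparated_of_card_eq hXY hcard⟩
  simpa [Nat.lt_succ_iff] using card_lt_card hsub

namespace IsProperColouringPerm

variable {n m : ℕ} {f : Finset ℕ → ℕ}

lemma apply_ne_of_ssubset (hf : IsProperColouringPerm n m f) {X Y : Finset ℕ}
    (hX : PermFacet n X) (hY : PermFacet n Y) (hXY : X ⊂ Y) : f X ≠ f Y :=
  fun h => (hf.2 X Y hX hY hXY.ne h).1 hXY.subset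

lemma dim_le (hf : IsProperColouringPerm n m f) : n ≤ m := by
  have hfacet : ∀ k ∈ range n, PermFacet n (range (k + 1)) := fun k hk =>
    permFacet_range k.succ_ne_zero (mem_range.mp hk)
  have hinj : Set.InjOn (fun k => f (range (k + 1))) (range n) := by
    intro a ha b hb hab
    by_contra hne
    rcases Nat.lt_or_gt_of_ne hne with h | h
    · exact hf.apply_ne_of_ssubset (hfacet a ha) (hfacet b hb)
        (strictMono_range (Nat.succ_lt_succ h)) hab
    · exact hf.apply_ne_of_ssubset (hfacet b hb) (hfacet a ha)
        (strictMono_range (Nat.succ_lt_succ h)) hab.symm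
  simpa using card_le_card_of_injOn _ (fun k hk => hf.1 _ (hfacet k hk)) hinj

end IsProperColouringPerm

theorem permutohedron_chromatic_number_general (n : ℕ) :
    IsLeast {m : ℕ | ∃ f : Finset ℕ → ℕ, IsProperColouringPerm n m f} n :=
  ⟨⟨Finset.card, isProperColouringPerm_card n⟩, fun _ ⟨_, hf⟩ => hf.dim_le⟩

/-- The chromatic number of the `n`-dimensional permutohedron equals `n`. -/
theorem permutohedron_chromatic_number (n : ℕ) (hn : 1 ≤ n) :
    IsLeast {m : ℕ | ∃ f : Finset ℕ → ℕ, IsProperColouringPerm n m f} n :=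
  permutohedron_chromatic_number_general n
end

section
/- Let 𝓑 be a building set on [n]₀ with [n]₀ ∈ 𝓑, and let X and Y be two distinct elements of 𝓑 that are proper subsets of [n]₀. Then there is no nested set with respect to 𝓑 containing both X and Y if and only if X and Y are incomparable with respect to inclusion and X ∪ Y ∈ 𝓑. -/
/-- A building set on `[n]₀ = {0,1,...,n}`: a collection of nonempty subsets of `[n]₀`
containing all singletons and closed under unions of intersecting members. -/
def IsBuildingSet (n : ℕ) (B : Set (Finset ℕ)) : Prop :=
  (∀ S ∈ B, S.Nonempty ∧ S ⊆ Finset.range (n + 1)) ∧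
  (∀ x, x < n + 1 → ({x} : Finset ℕ) ∈ B) ∧
  ∀ S₁ ∈ B, ∀ S₂ ∈ B, (S₁ ∩ S₂).Nonempty → S₁ ∪ S₂ ∈ B

/-- `N ⊆ B` is a nested set with respect to the building set `B` when the union of every
`N`-antichain (a family of at least two mutually incomparable members of `N`) is not an
element of `B`. -/
def IsNestedSet (B N : Set (Finset ℕ)) : Prop :=
  N ⊆ B ∧
  ∀ W : Finset (Finset ℕ), ↑W ⊆ N → 2 ≤ W.card →
    (∀ X ∈ W, ∀ Y ∈ W, X ≠ Y → ¬ X ⊆ Y) → W.sup id ∉ B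

/-! If `X` and `Y` are incomparable, any nested set containing both contains the antichain
`{X, Y}`, so `X ∪ Y ∉ B`; otherwise the pair `{X, Y}` is itself nested, since its only
possible antichain is `{X, Y}`. -/

variable {B N : Set (Finset ℕ)} {X Y : Finset ℕ}

theorem IsNestedSet.union_notMem (hN : IsNestedSet B N) (hX : X ∈ N) (hY : Y ∈ N)
    (hXY : ¬X ⊆ Y) (hYX : ¬Y ⊆ X) : X ∪ Y ∉ B := by
  have hne : X ≠ Y := by rintro rfl; exact hXY subset_rfl
  have hanti : ∀ A ∈ ({X, Y} : Finset (Finset ℕ)), ∀ C ∈ ({X, Y} : Finset (Finset ℕ)),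
      A ≠ C → ¬A ⊆ C := by
    simp only [Finset.mem_insert, Finset.mem_singleton]
    rintro A (rfl | rfl) C (rfl | rfl) hAC <;> first | exact absurd rfl hAC | assumption
  simpa using hN.2 {X, Y} (by simp [Set.insert_subset_iff, hX, hY])
    (Finset.card_pair hne).ge hanti

theorem isNestedSet_pair (hX : X ∈ B) (hY : Y ∈ B)
    (hU : ¬X ⊆ Y → ¬Y ⊆ X → X ∪ Y ∉ B) : IsNestedSet B {X, Y} := by
  refine ⟨Set.insert_subset hX (Set.singleton_subset_iff.2 hY), fun W hW hcard hanti => ?_⟩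
  have hWXY : W = {X, Y} :=
    Finset.eq_of_subset_of_card_le (Finset.coe_subset.1 (by simpa using hW))
      (Finset.card_le_two.trans hcard)
  subst hWXY
  have hne : X ≠ Y := by rintro rfl; simp at hcard
  simpa using hU (hanti X (by simp) Y (by simp) hne) (hanti Y (by simp) X (by simp) hne.symm)

theorem separated_iff_incomparable_union_in_building_general
    (B : Set (Finset ℕ))
    (X Y : Finset ℕ) (hX : X ∈ B) (hY : Y ∈ B) :
    (¬ ∃ N : Set (Finset ℕ), IsNestedSet B N ∧ X ∈ N ∧ Y ∈ N) ↔
      (¬ X ⊆ Y ∧ ¬ Y ⊆ X ∧ X ∪ Y ∈ B) := by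
  refine ⟨fun hsep => ?_, ?_⟩
  · by_contra hcomp
    exact hsep ⟨{X, Y}, isNestedSet_pair hX hY fun hXY hYX hU => hcomp ⟨hXY, hYX, hU⟩,
      Set.mem_insert X _, Set.mem_insert_of_mem X rfl⟩
  · rintro ⟨hXY, hYX, hU⟩ ⟨N, hN, hXN, hYN⟩
    exact hN.union_notMem hXN hYN hXY hYX hU

/-- Two facets (distinct proper members of the building set) are contained in no common
nested set if and only if they are incomparable and their union belongs to the
building set. -/
theorem separated_iff_incomparable_union_in_building (n : ℕ) (hn : 1 ≤ n)
    (B : Set (Finset ℕ)) (hB : IsBuildingSet n B) (hfull : Finset.range (n + 1) ∈ B)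
    (X Y : Finset ℕ) (hX : X ∈ B) (hY : Y ∈ B) (hXY : X ≠ Y)
    (hXp : X ⊂ Finset.range (n + 1)) (hYp : Y ⊂ Finset.range (n + 1)) :
    (¬ ∃ N : Set (Finset ℕ), IsNestedSet B N ∧ X ∈ N ∧ Y ∈ N) ↔
      (¬ X ⊆ Y ∧ ¬ Y ⊆ X ∧ X ∪ Y ∈ B) :=
  separated_iff_incomparable_union_in_building_general B X Y hX hY
end

section
/- Let X₁,...,X_k be pairwise separated segments of [n]₀. Then for all i, j, l ∈ {1,...,k}, if X_i ∩ X_j = X_i ∩ X_l then j = l. -/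
/-- A segment of `[n]₀ = {0,...,n}`: a set `[a,b] = {x : a ≤ x ≤ b}` with
`0 ≤ a ≤ b ≤ n` that is a proper subset of `[n]₀`. -/
def IsSegment (n : ℕ) (S : Finset ℕ) : Prop :=
  ∃ a b : ℕ, a ≤ b ∧ b ≤ n ∧ S = Finset.Icc a b ∧ S ⊂ Finset.range (n + 1)

/-- The segment `[a,b]` precedes the segment `[c,d]` when `a+1 ≤ c ≤ b+1` and `b < d`. -/
def SegPrecedes (n : ℕ) (S T : Finset ℕ) : Prop :=
  ∃ a b c d : ℕ, a ≤ b ∧ b ≤ n ∧ c ≤ d ∧ d ≤ n ∧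
    S = Finset.Icc a b ∧ T = Finset.Icc c d ∧ a + 1 ≤ c ∧ c ≤ b + 1 ∧ b < d

/-- Two segments are separated when one of them precedes the other. -/
def SegSeparated (n : ℕ) (S T : Finset ℕ) : Prop :=
  SegPrecedes n S T ∨ SegPrecedes n T S

/-- A proper colouring of the `n`-dimensional associahedron with `m` colours:
a function from the segments of `[n]₀` to `{1,...,m}` such that any two distinct
segments of the same colour are separated. -/
def IsProperColouringAssoc (n m : ℕ) (f : Finset ℕ → ℕ) : Prop :=
  (∀ S, IsSegment n S → f S ∈ Finset.Icc 1 m) ∧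
  ∀ S T, IsSegment n S → IsSegment n T → S ≠ T → f S = f T → SegSeparated n S T

/-- The chromatic number `α_n` of the `n`-dimensional associahedron: the least `m`
for which a proper colouring with `m` colours exists. -/
noncomputable def assocChromatic (n : ℕ) : ℕ :=
  sInf {m : ℕ | ∃ f : Finset ℕ → ℕ, IsProperColouringAssoc n m f}

open Finset

lemma Finset.Icc_eq_Icc_iff {α : Type*} [PartialOrder α] [LocallyFiniteOrder α] {a b c d : α}
    (h : a ≤ b) : Icc a b = Icc c d ↔ a = c ∧ b = d := by
  rw [← coe_inj, coe_Icc, coe_Icc, Set.Icc_eq_Icc_iff h]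

lemma SegPrecedes.endpoints {n a b c d : ℕ} (hab : a ≤ b) (hcd : c ≤ d)
    (h : SegPrecedes n (Icc a b) (Icc c d)) : a < c ∧ c ≤ b + 1 ∧ b < d := by
  obtain ⟨a', b', c', d', -, -, -, -, hS, hT, h₁, h₂, h₃⟩ := h
  obtain ⟨rfl, rfl⟩ := (Icc_eq_Icc_iff hab).1 hS
  obtain ⟨rfl, rfl⟩ := (Icc_eq_Icc_iff hcd).1 hT
  omega

lemma SegSeparated.endpoints {n a b c d : ℕ} (hab : a ≤ b) (hcd : c ≤ d)
    (h : SegSeparated n (Icc a b) (Icc c d)) :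
    (a < c ∧ c ≤ b + 1 ∧ b < d) ∨ (c < a ∧ a ≤ d + 1 ∧ d < b) :=
  h.imp (·.endpoints hab hcd) (·.endpoints hcd hab)

lemma inter_ne_inter_of_segPrecedes {n : ℕ} {S T U : Finset ℕ}
    (hS : IsSegment n S) (hT : IsSegment n T) (hU : IsSegment n U) (hTU : SegPrecedes n T U)
    (hST : S = T ∨ SegSeparated n S T) (hSU : S = U ∨ SegSeparated n S U) :
    S ∩ T ≠ S ∩ U := by
  obtain ⟨a, b, hab, -, rfl, -⟩ := hS
  obtain ⟨c, d, hcd, -, rfl, -⟩ := hT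
  obtain ⟨e, f, hef, -, rfl, -⟩ := hU
  have hTU' := hTU.endpoints hcd hef
  have hST' := hST.imp (Icc_eq_Icc_iff hab).1 (·.endpoints hab hcd)
  have hSU' := hSU.imp (Icc_eq_Icc_iff hab).1 (·.endpoints hab hef)
  intro h
  -- The endpoint conditions force `max a c ∈ S ∩ T \ U` or `min b f ∈ S ∩ U \ T`.
  have hleft := congrArg (max a c ∈ ·) h
  have hright := congrArg (min b f ∈ ·) h
  simp only [mem_inter, mem_Icc, eq_iff_iff] at hleft hright
  omega

theorem separated_segments_intersections_distinct_general
    (n k : ℕ) (X : Fin k → Finset ℕ)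
    (hseg : ∀ i, IsSegment n (X i))
    (hsep : ∀ i j, i ≠ j → SegSeparated n (X i) (X j)) :
    ∀ i j l : Fin k, X i ∩ X j = X i ∩ X l → j = l := by
  intro i j l h
  by_contra hjl
  have hrel : ∀ p q, X p = X q ∨ SegSeparated n (X p) (X q) := fun p q =>
    (eq_or_ne p q).imp (congrArg X) (hsep p q)
  rcases hsep j l hjl with hjl | hlj
  · exact inter_ne_inter_of_segPrecedes (hseg i) (hseg j) (hseg l) hjl (hrel i j) (hrel i l) h
  · exact inter_ne_inter_of_segPrecedes (hseg i) (hseg l) (hseg j) hlj (hrel i l) (hrel i j) h.symm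

/-- Corollary 1: if `X₁, ..., X_k` are pairwise separated segments of `[n]₀`, then
`X_i ∩ X_j = X_i ∩ X_l` implies `j = l`. -/
theorem separated_segments_intersections_distinct
    (n k : ℕ) (hn : 1 ≤ n) (X : Fin k → Finset ℕ)
    (hseg : ∀ i, IsSegment n (X i))
    (hsep : ∀ i j, i ≠ j → SegSeparated n (X i) (X j)) :
    ∀ i j l : Fin k, X i ∩ X j = X i ∩ X l → j = l :=
  separated_segments_intersections_distinct_general n k X hseg hsep
end

section
/- For every n ≥ 1 there is a proper colouring of the n-dimensional associahedron with Σ_{i=2}^{⌈n/2⌉+1} A_i colours; consequently α_n ≤ Σ_{i=2}^{⌈n/2⌉+1} A_i. -/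
/-- The pair `(A_i, B_i)` from the recursion (at argument `j`, the index is `i = j + 2`):
`B₂ = 0`; `B_i = n + 3 + B_{i-1} - (i-1)·A_{i-1}` for `2 < i ≤ ⌈n/2⌉ + 1`;
`A_i = ⌈(n + 3 + B_i)/i⌉` if `n` is even or `i ≤ ⌈n/2⌉`, and `A_i = 1` if `n` is odd
and `i = ⌈n/2⌉ + 1`.  (Note `⌈n/2⌉ = (n+1)/2` in natural division.) -/
noncomputable def assocAB (n : ℕ) : ℕ → ℤ × ℤ
  | 0 =>
      (if n % 2 = 0 ∨ 2 ≤ (n + 1) / 2 then ⌈((n : ℚ) + 3) / 2⌉ else 1, 0)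
  | j + 1 =>
      let p := assocAB n j
      let B : ℤ := (n : ℤ) + 3 + p.2 - ((j : ℤ) + 2) * p.1
      (if n % 2 = 0 ∨ j + 3 ≤ (n + 1) / 2 then
          ⌈((n : ℚ) + 3 + (B : ℚ)) / ((j : ℚ) + 3)⌉
        else 1, B)

/-- `A_i` from the recursion above, for `i ≥ 2`. -/
noncomputable def assocA (n i : ℕ) : ℤ := (assocAB n (i - 2)).1

/-!
Segments `[a, b]` of `[n]₀` correspond to the diagonals `{a, b + 2}` of an `(n + 3)`-gon, and two
segments are separated exactly when their diagonals cross. Sort the diagonals by cyclic length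
`k ∈ [2, ⌈n/2⌉ + 1]` and then by starting vertex `v`; diagonals of the same length whose starts
differ by less than `k` cross. Length by length, the diagonals of length `k` are coloured in runs
of `k` consecutive starts: the first `-B_k ≥ 0` starts complete the last, unfinished run of length
`k - 1` (whose diagonals they cross), and the remaining starts need `A_k` new colours.
-/

namespace AssocColouring

noncomputable def assocB (n i : ℕ) : ℤ := (assocAB n (i - 2)).2

variable {n i k v : ℕ}

lemma assocB_two : assocB n 2 = 0 := rfl

lemma assocB_succ (hi : 2 ≤ i) :
    assocB n (i + 1) = n + 3 + assocB n i - i * assocA n i := by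
  obtain ⟨j, rfl⟩ := Nat.exists_eq_add_of_le' hi
  simp only [assocB, assocA, Nat.add_sub_cancel, show j + 2 + 1 - 2 = j + 1 by omega, assocAB]
  push_cast; ring

lemma assocA_eq_ceil (hi : 2 ≤ i) (hreg : n % 2 = 0 ∨ i ≤ (n + 1) / 2) :
    assocA n i = ⌈((n + 3 + assocB n i : ℤ) : ℚ) / (i : ℕ)⌉ := by
  obtain ⟨j, rfl⟩ := Nat.exists_eq_add_of_le' hi
  cases j with
  | zero => simp [assocA, assocB, assocAB, hreg]
  | succ j =>
    simp only [assocA, assocB, Nat.add_sub_cancel, assocAB]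
    rw [if_pos (by omega)]
    push_cast; ring_nf

lemma assocA_of_odd (hn : n % 2 = 1) : assocA n ((n + 1) / 2 + 1) = 1 := by
  rcases Nat.exists_eq_add_of_le' (show 1 ≤ (n + 1) / 2 by omega) with ⟨j, hj⟩
  rw [hj]
  cases j with
  | zero => exact if_neg (by omega)
  | succ j => exact if_neg (by omega)

lemma assocB_succ_mem (hi : 2 ≤ i) (hreg : n % 2 = 0 ∨ i ≤ (n + 1) / 2) :
    1 - (i : ℤ) ≤ assocB n (i + 1) ∧ assocB n (i + 1) ≤ 0 := by
  rw [assocB_succ hi, assocA_eq_ceil hi hreg, Rat.ceil_intCast_div_natCast]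
  have hdiv := Int.mul_ediv_add_emod (-(n + 3 + assocB n i)) i
  have hmod := Int.emod_lt_of_pos (-(n + 3 + assocB n i)) (b := i) (by omega)
  have := Int.emod_nonneg (-(n + 3 + assocB n i)) (b := i) (by omega)
  constructor <;> linarith

lemma assocB_mem (hi : 2 ≤ i) (hiK : i ≤ (n + 1) / 2 + 1) :
    2 - (i : ℤ) ≤ assocB n i ∧ assocB n i ≤ 0 := by
  obtain rfl | ⟨j, hj, rfl⟩ : i = 2 ∨ ∃ j, 2 ≤ j ∧ i = j + 1 := by
    rcases hi.eq_or_lt with h | h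
    · exact .inl h.symm
    · exact .inr ⟨i - 1, by omega, by omega⟩
  · simp [assocB_two]
  · have := assocB_succ_mem hj (n := n) (by omega)
    push_cast
    constructor <;> linarith

lemma assocA_pos (hi : 2 ≤ i) (hiK : i ≤ (n + 1) / 2 + 1) : 0 < assocA n i := by
  by_cases hreg : n % 2 = 0 ∨ i ≤ (n + 1) / 2
  · have hB := assocB_mem hi hiK (n := n)
    have hB' := assocB_succ_mem hi hreg (n := n)
    rw [assocB_succ hi] at hB'
    exact pos_of_mul_pos_right (a := (i : ℤ)) (by omega) (by positivity)
  · rw [show i = (n + 1) / 2 + 1 by omega, assocA_of_odd (by omega)]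
    exact one_pos

noncomputable def colourOffset (n k : ℕ) : ℤ := ∑ i ∈ Finset.Ico 2 k, assocA n i

lemma colourOffset_succ (hk : 2 ≤ k) :
    colourOffset n (k + 1) = colourOffset n k + assocA n k :=
  Finset.sum_Ico_succ_top hk _

lemma colourOffset_strictMonoOn :
    StrictMonoOn (colourOffset n) (Set.Icc 2 ((n + 1) / 2 + 2)) := by
  intro k hk l hl hkl
  rw [Set.mem_Icc] at hk hl
  rw [colourOffset, colourOffset, ← Finset.sum_Ico_consecutive _ hk.1 hkl.le, lt_add_iff_pos_right]
  refine Finset.sum_pos (fun i hi => ?_) (Finset.nonempty_Ico.2 hkl)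
  rw [Finset.mem_Ico] at hi
  exact assocA_pos (by omega) (by omega)

lemma colourOffset_nonneg (hk : k ≤ (n + 1) / 2 + 2) : 0 ≤ colourOffset n k := by
  rcases le_or_gt k 2 with h | h
  · simp [colourOffset, Finset.Ico_eq_empty_of_le h]
  · exact (colourOffset_strictMonoOn ⟨le_rfl, by omega⟩ ⟨h.le, hk⟩ h).le

/-- `IsChord n k v` says that `(k, v)` indexes the chord from `v` to `v + k` (mod `n + 3`) of an
`(n + 3)`-gon, `k` being its cyclic length; a chord of length `(n + 3) / 2` is indexed only once. -/
def IsChord (n k v : ℕ) : Prop :=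
  2 ≤ k ∧ k ≤ (n + 1) / 2 + 1 ∧ v ≤ n + 2 ∧ (n % 2 = 1 → k = (n + 1) / 2 + 1 → v ≤ (n + 1) / 2)

/-- `(v + B_k) / k` numbers the run of `k` consecutive starts containing `v`; it is `-1` exactly for
the first `-B_k` starts, which thereby get the last colour used at length `k - 1`. -/
noncomputable def chordColour (n k v : ℕ) : ℤ := colourOffset n k + (v + assocB n k) / k + 1

lemma neg_one_le_ediv_of_isChord (h : IsChord n k v) : -1 ≤ ((v : ℤ) + assocB n k) / k := by
  obtain ⟨hk, hkK, -, -⟩ := h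
  rw [Int.le_ediv_iff_mul_le (by omega)]
  linarith [(assocB_mem hk hkK (n := n)).1]

lemma ediv_lt_assocA_of_isChord (h : IsChord n k v) :
    ((v : ℤ) + assocB n k) / k < assocA n k := by
  obtain ⟨hk, hkK, hv, hodd⟩ := h
  rw [Int.ediv_lt_iff_lt_mul (by omega)]
  have hB := assocB_mem hk hkK (n := n)
  by_cases hreg : n % 2 = 0 ∨ k ≤ (n + 1) / 2
  · have := (assocB_succ_mem hk hreg (n := n)).2
    rw [assocB_succ hk] at this
    linarith
  · obtain rfl : k = (n + 1) / 2 + 1 := by omega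
    rw [assocA_of_odd (by omega)]
    have := hodd (by omega) rfl
    push_cast
    omega

lemma chordColour_mem (h : IsChord n k v) :
    colourOffset n k ≤ chordColour n k v ∧ chordColour n k v ≤ colourOffset n (k + 1) := by
  have := neg_one_le_ediv_of_isChord h
  have := ediv_lt_assocA_of_isChord h
  rw [chordColour, colourOffset_succ h.1]
  omega

lemma one_le_chordColour (h : IsChord n k v) : 1 ≤ chordColour n k v := by
  obtain ⟨hk, hkK, -, -⟩ := id h
  by_cases hq : 0 ≤ ((v : ℤ) + assocB n k) / k
  · have := colourOffset_nonneg (n := n) (k := k) (by omega)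
    rw [chordColour]
    omega
  · have hk3 : 3 ≤ k := by
      by_contra hk3
      obtain rfl : k = 2 := by omega
      simp [assocB_two, Int.ediv_nonneg] at hq
    have hpos := colourOffset_strictMonoOn (n := n) ⟨le_rfl, by omega⟩ ⟨hk, by omega⟩
      (by omega : 2 < k)
    have := neg_one_le_ediv_of_isChord h
    rw [colourOffset, Finset.Ico_self, Finset.sum_empty] at hpos
    rw [chordColour]
    omega

lemma chordColour_le_colourOffset_top (h : IsChord n k v) :
    chordColour n k v ≤ colourOffset n ((n + 1) / 2 + 2) := by
  obtain ⟨hk, hkK, -, -⟩ := id h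
  exact (chordColour_mem h).2.trans <| (colourOffset_strictMonoOn (n := n)).monotoneOn
    ⟨by omega, by omega⟩ ⟨by omega, le_rfl⟩ (by omega)

lemma lt_add_of_chordColour_eq {w : ℕ} (hk : 0 < k) (h : chordColour n k v = chordColour n k w) :
    v < w + k := by
  have hq : ((v : ℤ) + assocB n k) / k = ((w : ℤ) + assocB n k) / k := by
    rw [chordColour, chordColour] at h
    omega
  have hv := Int.lt_ediv_add_one_mul_self ((v : ℤ) + assocB n k) (b := k) (by omega)
  have hw := Int.ediv_mul_le ((w : ℤ) + assocB n k) (b := k) (by omega)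
  rw [hq] at hv
  have : (v : ℤ) < w + k := by linarith
  exact_mod_cast this

/-- Equal colours on consecutive lengths `k < k + 1` only occur for a chord of length `k` among
the last starts and a chord of length `k + 1` among the first `-B_{k+1}` starts; these cross. -/
lemma chordColour_eq_of_lt {l w : ℕ} (hc : IsChord n k v) (hd : IsChord n l w) (hkl : k < l)
    (h : chordColour n k v = chordColour n l w) : l = k + 1 ∧ w + n + 4 ≤ v + k := by
  obtain ⟨hk, hkK, -, -⟩ := id hc
  obtain ⟨hl, hlK, -, -⟩ := id hd
  have hv := chordColour_mem hc
  have hw := chordColour_mem hd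
  obtain rfl : l = k + 1 := by
    by_contra hne
    have := colourOffset_strictMonoOn (n := n) ⟨by omega, by omega⟩ ⟨hl, by omega⟩
      (show k + 1 < l by omega)
    omega
  refine ⟨rfl, ?_⟩
  unfold chordColour at hv hw h
  rw [colourOffset_succ hk] at hv hw h
  have hqw : ((w : ℤ) + assocB n (k + 1)) / (k + 1 : ℕ) = -1 := by omega
  have hqv : ((v : ℤ) + assocB n k) / k = assocA n k - 1 := by omega
  have hw' : (w : ℤ) + assocB n (k + 1) < 0 := by
    by_contra hneg
    have := Int.ediv_nonneg (not_lt.1 hneg) (Int.natCast_nonneg (k + 1))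
    omega
  have hv' := Int.ediv_mul_le ((v : ℤ) + assocB n k) (b := k) (by omega)
  rw [hqv] at hv'
  have hstep := assocB_succ hk (n := n)
  have : (w : ℤ) + n + 4 ≤ v + k := by linarith
  exact_mod_cast this

lemma chordColour_eq {l w : ℕ} (hc : IsChord n k v) (hd : IsChord n l w)
    (h : chordColour n k v = chordColour n l w) :
    (k = l ∧ v < w + k ∧ w < v + k) ∨ (l = k + 1 ∧ w + n + 4 ≤ v + k) ∨
      (k = l + 1 ∧ v + n + 4 ≤ w + l) := by
  rcases lt_trichotomy k l with hkl | rfl | hlk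
  · exact .inr (.inl (chordColour_eq_of_lt hc hd hkl h))
  · exact .inl ⟨rfl, lt_add_of_chordColour_eq (by linarith [hc.1]) h,
      lt_add_of_chordColour_eq (by linarith [hc.1]) h.symm⟩
  · exact .inr (.inr (chordColour_eq_of_lt hd hc hlk h.symm))

/-- The chord `{a, b + 2}` of the segment `[a, b]`, indexed as in `IsChord`. -/
def chordOf (n a b : ℕ) : ℕ × ℕ :=
  if 2 * (b - a) + 1 ≤ n then (b - a + 2, a) else (n + 1 - (b - a), b + 2)

lemma isChord_chordOf {a b : ℕ} (hab : a ≤ b) (hb : b ≤ n) (hne : ¬(a = 0 ∧ b = n)) :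
    IsChord n (chordOf n a b).1 (chordOf n a b).2 := by
  unfold chordOf IsChord
  split_ifs <;> omega

noncomputable def intervalColour (n a b : ℕ) : ℤ :=
  chordColour n (chordOf n a b).1 (chordOf n a b).2

lemma separated_of_intervalColour_eq {a b c d : ℕ} (hab : a ≤ b) (hb : b ≤ n)
    (hne₁ : ¬(a = 0 ∧ b = n)) (hcd : c ≤ d) (hd : d ≤ n) (hne₂ : ¬(c = 0 ∧ d = n))
    (hne : ¬(a = c ∧ b = d)) (h : intervalColour n a b = intervalColour n c d) :
    (a + 1 ≤ c ∧ c ≤ b + 1 ∧ b < d) ∨ (c + 1 ≤ a ∧ a ≤ d + 1 ∧ d < b) := by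
  have := chordColour_eq (isChord_chordOf hab hb hne₁) (isChord_chordOf hcd hd hne₂) h
  unfold chordOf at this
  split_ifs at this <;> omega

noncomputable def segmentColour (n : ℕ) (S : Finset ℕ) : ℕ :=
  (intervalColour n (sInf (S : Set ℕ)) (sSup (S : Set ℕ))).toNat

lemma segmentColour_Icc {a b : ℕ} (hab : a ≤ b) :
    segmentColour n (Finset.Icc a b) = (intervalColour n a b).toNat := by
  rw [segmentColour, Finset.coe_Icc, csInf_Icc hab, csSup_Icc hab]

lemma exists_eq_Icc_of_isSegment {S : Finset ℕ} (h : IsSegment n S) :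
    ∃ a b, a ≤ b ∧ b ≤ n ∧ ¬(a = 0 ∧ b = n) ∧ S = Finset.Icc a b := by
  obtain ⟨a, b, hab, hb, rfl, hproper⟩ := h
  refine ⟨a, b, hab, hb, ?_, rfl⟩
  rintro ⟨rfl, rfl⟩
  exact hproper.ne (by ext x; simp)

theorem isProperColouringAssoc_segmentColour :
    IsProperColouringAssoc n (colourOffset n ((n + 1) / 2 + 2)).toNat (segmentColour n) := by
  constructor
  · intro S hS
    obtain ⟨a, b, hab, hb, hne, rfl⟩ := exists_eq_Icc_of_isSegment hS
    have := chordColour_le_colourOffset_top (isChord_chordOf hab hb hne)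
    have := one_le_chordColour (isChord_chordOf hab hb hne)
    rw [segmentColour_Icc hab, Finset.mem_Icc, intervalColour]
    omega
  · intro S T hS hT hST hST'
    obtain ⟨a, b, hab, hb, hne₁, rfl⟩ := exists_eq_Icc_of_isSegment hS
    obtain ⟨c, d, hcd, hd, hne₂, rfl⟩ := exists_eq_Icc_of_isSegment hT
    have hne : ¬(a = c ∧ b = d) := by
      rintro ⟨rfl, rfl⟩
      exact hST rfl
    rw [segmentColour_Icc hab, segmentColour_Icc hcd] at hST'
    have h := separated_of_intervalColour_eq hab hb hne₁ hcd hd hne₂ hne (by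
      have := one_le_chordColour (isChord_chordOf hab hb hne₁)
      have := one_le_chordColour (isChord_chordOf hcd hd hne₂)
      unfold intervalColour at hST' ⊢
      omega)
    rcases h with ⟨h₁, h₂, h₃⟩ | ⟨h₁, h₂, h₃⟩
    · exact .inl ⟨a, b, c, d, hab, hb, hcd, hd, rfl, rfl, h₁, h₂, h₃⟩
    · exact .inr ⟨c, d, a, b, hcd, hd, hab, hb, rfl, rfl, h₁, h₂, h₃⟩

end AssocColouring

theorem assoc_colouring_with_sum_A_general (n : ℕ) :
    (∃ m : ℕ, (m : ℤ) = ∑ i ∈ Finset.Icc 2 ((n + 1) / 2 + 1), assocA n i ∧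
       ∃ f : Finset ℕ → ℕ, IsProperColouringAssoc n m f) ∧
    (assocChromatic n : ℤ) ≤ ∑ i ∈ Finset.Icc 2 ((n + 1) / 2 + 1), assocA n i := by
  have hm : ((AssocColouring.colourOffset n ((n + 1) / 2 + 2)).toNat : ℤ) =
      ∑ i ∈ Finset.Icc 2 ((n + 1) / 2 + 1), assocA n i := by
    rw [Int.toNat_of_nonneg (AssocColouring.colourOffset_nonneg le_rfl),
      AssocColouring.colourOffset, ← Finset.Ico_add_one_right_eq_Icc]
    rfl
  have hproper := AssocColouring.isProperColouringAssoc_segmentColour (n := n)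
  exact ⟨⟨_, hm, _, hproper⟩, hm ▸ Nat.cast_le.mpr (Nat.sInf_le ⟨_, hproper⟩)⟩

/-- Lemma 0: there is a proper colouring of the `n`-dimensional associahedron with
`Σ_{i=2}^{⌈n/2⌉+1} A_i` colours; consequently `α_n ≤ Σ_{i=2}^{⌈n/2⌉+1} A_i`. -/
theorem assoc_colouring_with_sum_A (n : ℕ) (hn : 1 ≤ n) :
    (∃ m : ℕ, (m : ℤ) = ∑ i ∈ Finset.Icc 2 ((n + 1) / 2 + 1), assocA n i ∧
       ∃ f : Finset ℕ → ℕ, IsProperColouringAssoc n m f) ∧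
    (assocChromatic n : ℤ) ≤ ∑ i ∈ Finset.Icc 2 ((n + 1) / 2 + 1), assocA n i :=
  assoc_colouring_with_sum_A_general n
end

section
/- For every n ≥ 1, the chromatic number α_n of the n-dimensional associahedron satisfies α_n ≥ n·(1/1 + 1/2 + ⋯ + 1/⌈n/2⌉) + 4·(1/1 + 1/2 + ⋯ + 1/⌈n/2⌉) − (3n+8)/2. -/
/-!
Two distinct segments of the same colour are comparable for precedence, so a colour class is a
chain along which starts and ends both increase, and every start is at most one past the smallest
end; hence a class containing a segment with `d + 1` elements has at most `d + 2` members.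
Weighting such a segment by `1 / (d + 2)`, every colour class has total weight at most `1`, so
`α_n` is at least the total weight `(n + 3) H_{n+1} - (2n + 3)`. With `k = ⌈n/2⌉`, the
elementary estimate `H_{2k} - H_k ≥ 1/2 + (k - 1) / (3(2k + 1))` bounds this from below by the
stated expression.
-/

theorem harmonic_mono : Monotone harmonic :=
  monotone_nat_of_le_succ fun n => by
    rw [harmonic_succ]
    exact le_add_of_nonneg_right (by positivity)

theorem harmonic_two_mul_succ (k : ℕ) :
    harmonic (2 * (k + 1)) = harmonic (2 * k) + 1 / (2 * k + 1) + 1 / (2 * k + 2) := by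
  rw [show 2 * (k + 1) = 2 * k + 1 + 1 by ring, harmonic_succ, harmonic_succ]
  push_cast
  ring_nf

theorem harmonic_succ' (k : ℕ) : harmonic (k + 1) = harmonic k + 1 / (k + 1) := by
  rw [harmonic_succ]
  push_cast
  ring

/-- Telescoping against `1 / ((2i-1)(2i+1))`, since `harmonic (2k) - harmonic k` is the sum of
`1 / ((2i-1) 2i)` over `i ≤ k`. -/
theorem half_add_le_harmonic_two_mul_sub {k : ℕ} (hk : 1 ≤ k) :
    1 / 2 + (k - 1) / (3 * (2 * k + 1)) ≤ harmonic (2 * k) - harmonic k := by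
  induction k, hk using Nat.le_induction with
  | base => norm_num [harmonic]
  | succ k hk ih =>
    rw [harmonic_two_mul_succ, harmonic_succ']
    push_cast
    have hk' : (0 : ℚ) ≤ k := k.cast_nonneg
    have hlhs : (k + 1 - 1 : ℚ) / (3 * (2 * (k + 1) + 1)) - (k - 1) / (3 * (2 * k + 1))
        = 1 / ((2 * k + 1) * (2 * k + 3)) := by
      field_simp
      ring
    have hrhs : (1 : ℚ) / (2 * k + 1) + 1 / (2 * k + 2) - 1 / (k + 1)
        = 1 / ((2 * k + 1) * (2 * k + 2)) := by
      field_simp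
      ring
    have hcmp : (1 : ℚ) / ((2 * k + 1) * (2 * k + 3)) ≤ 1 / ((2 * k + 1) * (2 * k + 2)) :=
      one_div_le_one_div_of_le (by positivity) (by nlinarith)
    linarith

theorem harmonic_le_two_mul_succ_mul {k : ℕ} (hk : 1 ≤ k) :
    harmonic k ≤ 2 * (k + 1) * (harmonic (2 * k) - harmonic k - 1 / 2) + 5 / 2 := by
  induction k, hk using Nat.le_induction with
  | base => norm_num [harmonic]
  | succ k hk ih =>
    have hA := half_add_le_harmonic_two_mul_sub hk
    rw [harmonic_two_mul_succ, harmonic_succ']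
    push_cast
    have hk' : (1 : ℚ) ≤ k := by exact_mod_cast hk
    have hgain : 2 * (k + 2) * (1 / (2 * k + 1) + 1 / (2 * k + 2) - 1 / (k + 1) : ℚ)
        = (k + 2) / ((k + 1) * (2 * k + 1)) := by
      field_simp
      ring
    have hneed : 1 / (k + 1) - (k + 2) / ((k + 1) * (2 * k + 1))
        ≤ 2 * ((k - 1) / (3 * (2 * k + 1)) : ℚ) := by
      have hdiff : 2 * ((k - 1) / (3 * (2 * k + 1)) : ℚ)
          - (1 / (k + 1) - (k + 2) / ((k + 1) * (2 * k + 1)))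
          = (2 * k - 1) * (k - 1) / (3 * (k + 1) * (2 * k + 1)) := by
        field_simp
        ring
      have hpos : (0 : ℚ) ≤ (2 * k - 1) * (k - 1) / (3 * (k + 1) * (2 * k + 1)) := by
        apply div_nonneg <;> nlinarith
      linarith
    linarith

theorem harmonic_half_bound {n : ℕ} (hn : 1 ≤ n) :
    (n : ℚ) * harmonic ((n + 1) / 2) + 4 * harmonic ((n + 1) / 2) - (3 * n + 8) / 2
      ≤ (n + 3) * harmonic (n + 1) - (2 * n + 3) := by
  set k := (n + 1) / 2
  have hk : 1 ≤ k := by omega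
  have hkn : (2 * k + 2 : ℚ) ≤ n + 3 := by exact_mod_cast (by omega : 2 * k + 2 ≤ n + 3)
  have hexcess : 0 ≤ harmonic (2 * k) - harmonic k - 1 / 2 := by
    have : (0 : ℚ) ≤ (k - 1) / (3 * (2 * k + 1)) :=
      div_nonneg (sub_nonneg.2 (by exact_mod_cast hk)) (by positivity)
    linarith [half_add_le_harmonic_two_mul_sub hk]
  have hmono : (n + 3) * harmonic (2 * k) ≤ (n + 3) * harmonic (n + 1) :=
    mul_le_mul_of_nonneg_left (harmonic_mono (by omega)) (by positivity)
  linarith [harmonic_le_two_mul_succ_mul hk, mul_le_mul_of_nonneg_right hkn hexcess]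

namespace Associahedron

open Finset

/-- The pair `(a, d)` encodes the segment `[a, a + d]`. -/
def seg (p : ℕ × ℕ) : Finset ℕ := Icc p.1 (p.1 + p.2)

def Precedes (p q : ℕ × ℕ) : Prop :=
  p.1 < q.1 ∧ q.1 ≤ p.1 + p.2 + 1 ∧ p.1 + p.2 < q.1 + q.2

theorem seg_injective : Function.Injective seg := by
  rintro ⟨a, d⟩ ⟨c, e⟩ h
  have h' := congrArg (fun S : Finset ℕ => (S : Set ℕ)) h
  simp only [seg, coe_Icc] at h'
  obtain ⟨rfl, h⟩ := (Set.Icc_eq_Icc_iff (by omega)).1 h'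
  simp only [Prod.mk.injEq, true_and]
  omega

theorem precedes_of_segPrecedes {n : ℕ} {p q : ℕ × ℕ} (h : SegPrecedes n (seg p) (seg q)) :
    Precedes p q := by
  obtain ⟨a, b, c, d, hab, -, hcd, -, hp, hq, h₁, h₂, h₃⟩ := h
  obtain ⟨rfl, hb⟩ : p = (a, b - a) := seg_injective (by rw [hp, seg]; congr 1; omega)
  obtain ⟨rfl, hd⟩ : q = (c, d - c) := seg_injective (by rw [hq, seg]; congr 1; omega)
  simp only [Precedes]
  omega

section Chain

variable {C : Finset (ℕ × ℕ)}
  (hC : (C : Set (ℕ × ℕ)).Pairwise fun p q => Precedes p q ∨ Precedes q p)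
include hC

theorem precedes_of_fst_lt {p q : ℕ × ℕ} (hp : p ∈ C) (hq : q ∈ C) (h : p.1 < q.1) :
    Precedes p q :=
  (hC hp hq (by rintro rfl; omega)).resolve_right fun h' => by simp only [Precedes] at h'; omega

theorem eq_of_fst_eq {p q : ℕ × ℕ} (hp : p ∈ C) (hq : q ∈ C) (h : p.1 = q.1) : p = q := by
  by_contra hne
  rcases hC hp hq hne with h' | h' <;> simp only [Precedes] at h' <;> omega

theorem eq_of_end_eq {p q : ℕ × ℕ} (hp : p ∈ C) (hq : q ∈ C) (h : p.1 + p.2 = q.1 + q.2) :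
    p = q := by
  by_contra hne
  rcases hC hp hq hne with h' | h' <;> simp only [Precedes] at h' <;> omega

/-- Starts and ends increase together along the chain, and every start is at most one past the
smallest end; so `q ↦ end q` (for `q` starting no later than `p`) and `q ↦ start q + d`
(for the others) inject `C` into an interval of length `d + 2`. -/
theorem card_le_of_pairwise_precedes {p : ℕ × ℕ} (hp : p ∈ C) : #C ≤ p.2 + 2 := by
  obtain ⟨r, hr, hr_min⟩ := C.exists_min_image (fun q => q.1 + q.2) ⟨p, hp⟩
  have hstart : ∀ q ∈ C, q.1 ≤ r.1 + r.2 + 1 := by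
    intro q hq
    rcases lt_or_ge r.1 q.1 with h | h
    · exact (precedes_of_fst_lt hC hr hq h).2.1
    · omega
  have hend : ∀ q ∈ C, q.1 ≤ p.1 → q.1 + q.2 ≤ p.1 + p.2 := by
    intro q hq h
    rcases h.lt_or_eq with h | h
    · exact (precedes_of_fst_lt hC hq hp h).2.2.le
    · rw [eq_of_fst_eq hC hq hp h]
  let φ : ℕ × ℕ → ℕ := fun q => if q.1 ≤ p.1 then q.1 + q.2 else q.1 + p.2
  calc #C ≤ #(Icc (r.1 + r.2) (r.1 + r.2 + 1 + p.2)) := card_le_card_of_injOn φ ?_ ?_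
    _ = p.2 + 2 := by simp only [Nat.card_Icc]; omega
  · intro q hq
    have := hr_min q hq
    have := hr_min p hp
    have := hstart q hq
    have := hstart p hp
    simp only [φ, coe_Icc, Set.mem_Icc]
    split_ifs with h
    · have := hend q hq h
      omega
    · omega
  · intro q hq q' hq' h
    simp only [φ] at h
    split_ifs at h with h₁ h₂ h₂
    · exact eq_of_end_eq hC hq hq' h
    · have := hend q hq h₁
      omega
    · have := hend q' hq' h₂
      omega
    · exact eq_of_fst_eq hC hq hq' (by omega)

theorem sum_inv_le_one : ∑ p ∈ C, (1 / (p.2 + 2) : ℚ) ≤ 1 := by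
  calc ∑ p ∈ C, (1 / (p.2 + 2) : ℚ) ≤ ∑ _p ∈ C, (1 / #C : ℚ) := by
        refine sum_le_sum fun p hp => one_div_le_one_div_of_le ?_ ?_
        · exact Nat.cast_pos.2 (card_pos.2 ⟨p, hp⟩)
        · exact_mod_cast card_le_of_pairwise_precedes hC hp
    _ ≤ 1 := by
        rw [sum_const, nsmul_eq_mul, mul_one_div]
        exact div_self_le_one _

end Chain

def segCodes (n : ℕ) : Finset (ℕ × ℕ) :=
  (range (n + 1) ×ˢ range n).filter fun p => p.1 + p.2 ≤ n

theorem mem_segCodes {n : ℕ} {p : ℕ × ℕ} : p ∈ segCodes n ↔ p.2 < n ∧ p.1 + p.2 ≤ n := by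
  simp only [segCodes, mem_filter, mem_product, mem_range]
  omega

theorem isSegment_seg {n : ℕ} {p : ℕ × ℕ} (hp : p ∈ segCodes n) : IsSegment n (seg p) := by
  rw [mem_segCodes] at hp
  refine ⟨p.1, p.1 + p.2, by omega, hp.2, rfl, ?_⟩
  have hsub : seg p ⊆ range (n + 1) := fun x hx => by
    simp only [seg, mem_Icc, mem_range] at hx ⊢
    omega
  refine Finset.ssubset_iff_subset_ne.2 ⟨hsub, fun h => ?_⟩
  have := congrArg card h
  simp only [seg, Nat.card_Icc, card_range] at this
  omega

theorem sum_segCodes_le {n m : ℕ} {f : Finset ℕ → ℕ} (hf : IsProperColouringAssoc n m f) :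
    ∑ p ∈ segCodes n, (1 / (p.2 + 2) : ℚ) ≤ m := by
  have hmaps : ∀ p ∈ segCodes n, f (seg p) ∈ Icc 1 m := fun p hp => hf.1 _ (isSegment_seg hp)
  rw [← sum_fiberwise_of_maps_to hmaps]
  calc _ ≤ ∑ _c ∈ Icc 1 m, (1 : ℚ) := sum_le_sum fun c _ => sum_inv_le_one ?_
    _ = m := by simp
  intro p hp q hq hne
  simp only [coe_filter, Set.mem_ofPred_eq] at hp hq
  exact (hf.2 _ _ (isSegment_seg hp.1) (isSegment_seg hq.1) (seg_injective.ne hne)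
    (hp.2.trans hq.2.symm)).imp precedes_of_segPrecedes precedes_of_segPrecedes

theorem sum_segCodes_eq (n : ℕ) :
    ∑ p ∈ segCodes n, (1 / (p.2 + 2) : ℚ) = (n + 3) * harmonic (n + 1) - (2 * n + 3) := by
  have hharm : harmonic (n + 1) = ∑ d ∈ range n, (1 / (d + 2) : ℚ) + 1 := by
    simp only [harmonic, sum_range_succ', one_div]
    push_cast
    ring_nf
  have hcount : ∀ d ∈ range n,
      ((n + 1 - d : ℕ) : ℚ) * (1 / (d + 2)) = (n + 3) * (1 / (d + 2)) - 1 := by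
    intro d hd
    rw [mem_range] at hd
    rw [Nat.cast_sub (by omega)]
    field_simp
    push_cast
    ring
  rw [sum_finset_product_right (segCodes n) (range n) (fun d => range (n + 1 - d))
    fun p => by rw [mem_segCodes, mem_range, mem_range]; omega]
  simp only [sum_const, card_range, nsmul_eq_mul]
  rw [sum_congr rfl hcount, sum_sub_distrib, ← mul_sum, hharm]
  simp only [sum_const, card_range, nsmul_eq_mul, mul_one]
  ring

theorem exists_isProperColouringAssoc (n : ℕ) :
    ∃ f : Finset ℕ → ℕ, IsProperColouringAssoc n (2 ^ (n + 1)) f := by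
  refine ⟨fun S => ∑ i ∈ S, 2 ^ i + 1, fun S ⟨_, _, _, _, _, hS⟩ => ?_,
    fun S T _ _ hne h => (hne (geomSum_injective le_rfl (add_right_cancel h))).elim⟩
  have := Nat.geomSum_lt le_rfl fun i hi => mem_range.1 (hS.subset hi)
  simp only [mem_Icc]
  omega

end Associahedron

open Associahedron in
/-- Inequality (1): `α_n ≥ n·(1 + 1/2 + ⋯ + 1/⌈n/2⌉) + 4·(1 + 1/2 + ⋯ + 1/⌈n/2⌉) − (3n+8)/2`. -/
theorem assocChromatic_lower_bound (n : ℕ) (hn : 1 ≤ n) :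
    (assocChromatic n : ℝ) ≥
      (n : ℝ) * (∑ i ∈ Finset.Icc 1 ((n + 1) / 2), (1 : ℝ) / i) +
        4 * (∑ i ∈ Finset.Icc 1 ((n + 1) / 2), (1 : ℝ) / i) -
        (3 * (n : ℝ) + 8) / 2 := by
  obtain ⟨f, hf⟩ : ∃ f, IsProperColouringAssoc n (assocChromatic n) f :=
    Nat.sInf_mem (s := {m | ∃ f, IsProperColouringAssoc n m f})
      ⟨_, exists_isProperColouringAssoc n⟩
  have hweights := sum_segCodes_le hf
  rw [sum_segCodes_eq] at hweights
  have hharmonic : ∑ i ∈ Finset.Icc 1 ((n + 1) / 2), (1 : ℝ) / i = harmonic ((n + 1) / 2) := by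
    simp [harmonic_eq_sum_Icc, one_div]
  have hreal := (Rat.cast_le (K := ℝ)).2 ((harmonic_half_bound hn).trans hweights)
  push_cast at hreal
  rw [hharmonic]
  exact hreal
end

section
/- For every n ≥ 1, the chromatic number α_n of the n-dimensional associahedron satisfies α_n ≤ n·(1/1 + 1/2 + ⋯ + 1/(⌈n/2⌉+1)) + 3·(1/1 + 1/2 + ⋯ + 1/(⌈n/2⌉+1)). -/
/-!
Colour a segment `[a, b]` by its length `d = b - a` together with the block `a / (d + 2)` of its
left endpoint. Two distinct segments of equal length whose left endpoints lie in the same block of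
`d + 2` consecutive integers overlap or abut, so the one starting first precedes the other. For
each `d < n` there are at most `(n + 2) / (d + 2)` blocks, so at most
`(n + 2) (H_{n+1} - 1)` colours are used, and `H_{n+1} - 1 ≤ H_{⌈n/2⌉+1}` because the tail of
the harmonic sum beyond `⌈n/2⌉ + 1` has at most `⌈n/2⌉ + 2` terms, each at most `1/(⌈n/2⌉ + 2)`.
-/

open Finset

theorem assocChromatic_le_card {α : Type*} {n : ℕ} (s : Finset α) (g : Finset ℕ → α)
    (hmaps : ∀ S, IsSegment n S → g S ∈ s)
    (hsep : ∀ S T, IsSegment n S → IsSegment n T → S ≠ T → g S = g T → SegSeparated n S T) :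
    assocChromatic n ≤ #s := by
  classical
  let f : Finset ℕ → ℕ := fun S => if h : g S ∈ s then s.equivFin ⟨g S, h⟩ + 1 else 1
  have hf (S) (hS : IsSegment n S) : f S = s.equivFin ⟨g S, hmaps S hS⟩ + 1 := by
    simp only [f, dif_pos (hmaps S hS)]
  refine Nat.sInf_le ⟨f, fun S hS => ?_, fun S T hS hT hne hfST => hsep S T hS hT hne ?_⟩
  · rw [hf S hS, mem_Icc]
    exact ⟨by omega, (s.equivFin _).isLt⟩
  · rw [hf S hS, hf T hT, add_left_inj, Fin.val_inj, s.equivFin.apply_eq_iff_eq] at hfST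
    exact congrArg Subtype.val hfST

theorem Nat.lt_add_of_div_eq_div {a c k : ℕ} (hk : 0 < k) (h : a / k = c / k) :
    c < a + k := by
  calc c < k * (c / k + 1) := Nat.lt_mul_div_succ c hk
    _ = k * (a / k) + k := by rw [h, mul_add_one]
    _ ≤ a + k := Nat.add_le_add_right (Nat.mul_div_le a k) k

theorem sub_lt_of_Icc_ssubset_range {n a b : ℕ} (hab : a ≤ b) (h : Icc a b ⊂ range (n + 1)) :
    b - a < n := by
  have := card_lt_card h
  rw [Nat.card_Icc, card_range] at this
  omega

noncomputable def segmentClass (S : Finset ℕ) : Σ _ : ℕ, ℕ :=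
  ⟨sSup (S : Set ℕ) - sInf (S : Set ℕ),
    sInf (S : Set ℕ) / (sSup (S : Set ℕ) - sInf (S : Set ℕ) + 2)⟩

theorem segmentClass_Icc {a b : ℕ} (hab : a ≤ b) :
    segmentClass (Icc a b) = ⟨b - a, a / (b - a + 2)⟩ := by
  simp only [segmentClass, coe_Icc, csInf_Icc hab, csSup_Icc hab]

def segmentClasses (n : ℕ) : Finset (Σ _ : ℕ, ℕ) :=
  (range n).sigma fun d => range ((n - d) / (d + 2) + 1)

theorem card_segmentClasses (n : ℕ) :
    #(segmentClasses n) = ∑ d ∈ range n, ((n - d) / (d + 2) + 1) := by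
  simp only [segmentClasses, card_sigma, card_range]

theorem segmentClass_mem_segmentClasses {n : ℕ} {S : Finset ℕ} (hS : IsSegment n S) :
    segmentClass S ∈ segmentClasses n := by
  obtain ⟨a, b, hab, hbn, rfl, hss⟩ := hS
  have hlt := sub_lt_of_Icc_ssubset_range hab hss
  simp only [segmentClass_Icc hab, segmentClasses, mem_sigma, mem_range, Nat.lt_succ_iff]
  exact ⟨hlt, Nat.div_le_div_right (by omega)⟩

theorem segSeparated_of_segmentClass_eq {n : ℕ} {S T : Finset ℕ} (hS : IsSegment n S)
    (hT : IsSegment n T) (hne : S ≠ T) (h : segmentClass S = segmentClass T) :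
    SegSeparated n S T := by
  wlog hle : sInf (S : Set ℕ) ≤ sInf (T : Set ℕ) generalizing S T
  · exact (this hT hS hne.symm h.symm (by omega)).symm
  obtain ⟨a, b, hab, hbn, rfl, -⟩ := hS
  obtain ⟨c, d, hcd, hdn, rfl, -⟩ := hT
  rw [segmentClass_Icc hab, segmentClass_Icc hcd, Sigma.mk.injEq, heq_eq_eq] at h
  obtain ⟨hlen, hblock⟩ := h
  simp only [coe_Icc, csInf_Icc hab, csInf_Icc hcd] at hle
  rw [← hlen] at hblock
  have hwin := Nat.lt_add_of_div_eq_div (by omega) hblock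
  have hac : a ≠ c := by rintro rfl; exact hne (by rw [show b = d by omega])
  exact Or.inl ⟨a, b, c, d, hab, hbn, hcd, hdn, rfl, rfl, by omega, by omega, by omega⟩

theorem assocChromatic_le_sum (n : ℕ) :
    assocChromatic n ≤ ∑ d ∈ range n, ((n - d) / (d + 2) + 1) :=
  card_segmentClasses n ▸ assocChromatic_le_card _ segmentClass
    (fun _ => segmentClass_mem_segmentClasses)
    (fun _ _ hS hT => segSeparated_of_segmentClass_eq hS hT)

theorem cast_sum_div_add_one_le (n : ℕ) :
    ((∑ d ∈ range n, ((n - d) / (d + 2) + 1) : ℕ) : ℝ) ≤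
      (n + 2) * ∑ d ∈ range n, (1 : ℝ) / (d + 2) := by
  rw [Nat.cast_sum, mul_sum]
  refine sum_le_sum fun d hd => ?_
  have hdn : d ≤ n := (mem_range.1 hd).le
  rw [← Nat.add_div_right _ (by omega : 0 < d + 2), show n - d + (d + 2) = n + 2 by omega,
    mul_one_div]
  exact_mod_cast Nat.cast_div_le

theorem sum_range_one_div_add_two_add_one (n : ℕ) :
    ∑ d ∈ range n, (1 : ℝ) / (d + 2) + 1 = ∑ i ∈ Icc 1 (n + 1), (1 : ℝ) / i := by
  induction n with
  | zero => simp
  | succ n ih =>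
    rw [sum_range_succ, add_right_comm, ih, sum_Icc_succ_top (b := n + 1) (by omega)]
    push_cast
    ring

theorem sum_Ioc_one_div_le_one {m k : ℕ} (hk : k ≤ 2 * m + 1) :
    ∑ i ∈ Ioc m k, (1 : ℝ) / i ≤ 1 := by
  calc ∑ i ∈ Ioc m k, (1 : ℝ) / i
      ≤ ∑ _i ∈ Ioc m k, (1 : ℝ) / (m + 1) := sum_le_sum fun i hi => by
        have : (m : ℝ) + 1 ≤ i := by exact_mod_cast (mem_Ioc.1 hi).1
        gcongr
    _ = (k - m : ℕ) / (m + 1) := by rw [sum_const, Nat.card_Ioc, nsmul_eq_mul, mul_one_div]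
    _ ≤ 1 := by
        rw [div_le_one (by positivity)]
        exact_mod_cast (by omega : k - m ≤ m + 1)

theorem sum_range_one_div_add_two_le (n : ℕ) :
    ∑ d ∈ range n, (1 : ℝ) / (d + 2) ≤ ∑ i ∈ Icc 1 ((n + 1) / 2 + 1), (1 : ℝ) / i := by
  have hsplit := sum_Ioc_consecutive (fun i : ℕ => (1 : ℝ) / i) (Nat.zero_le ((n + 1) / 2 + 1))
    (by omega : (n + 1) / 2 + 1 ≤ n + 1)
  rw [← Icc_add_one_left_eq_Ioc 0, ← Icc_add_one_left_eq_Ioc 0, zero_add] at hsplit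
  have := sum_range_one_div_add_two_add_one n
  have := sum_Ioc_one_div_le_one (by omega : n + 1 ≤ 2 * ((n + 1) / 2 + 1) + 1)
  linarith

theorem assocChromatic_upper_bound_general (n : ℕ) :
    (assocChromatic n : ℝ) ≤
      (n : ℝ) * (∑ i ∈ Finset.Icc 1 ((n + 1) / 2 + 1), (1 : ℝ) / i) +
        3 * (∑ i ∈ Finset.Icc 1 ((n + 1) / 2 + 1), (1 : ℝ) / i) := by
  have hH : 0 ≤ ∑ i ∈ Icc 1 ((n + 1) / 2 + 1), (1 : ℝ) / i := by positivity
  calc (assocChromatic n : ℝ)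
      ≤ ((∑ d ∈ range n, ((n - d) / (d + 2) + 1) : ℕ) : ℝ) := by
        exact_mod_cast assocChromatic_le_sum n
    _ ≤ (n + 2) * ∑ d ∈ range n, (1 : ℝ) / (d + 2) := cast_sum_div_add_one_le n
    _ ≤ (n + 2) * ∑ i ∈ Icc 1 ((n + 1) / 2 + 1), (1 : ℝ) / i :=
        mul_le_mul_of_nonneg_left (sum_range_one_div_add_two_le n) (by positivity)
    _ ≤ _ := by linarith

/-- Inequality (2): `α_n ≤ n·(1 + 1/2 + ⋯ + 1/(⌈n/2⌉+1)) + 3·(1 + 1/2 + ⋯ + 1/(⌈n/2⌉+1))`. -/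
theorem assocChromatic_upper_bound (n : ℕ) (hn : 1 ≤ n) :
    (assocChromatic n : ℝ) ≤
      (n : ℝ) * (∑ i ∈ Finset.Icc 1 ((n + 1) / 2 + 1), (1 : ℝ) / i) +
        3 * (∑ i ∈ Finset.Icc 1 ((n + 1) / 2 + 1), (1 : ℝ) / i) :=
  assocChromatic_upper_bound_general n
end

section
/- Two cyclic segments X and Y of [n]₀ are incomparable with respect to inclusion and their union is either a cyclic segment of [n]₀ or all of [n]₀ if and only if one of X, Y precedes the other. -/
/-- The cyclic segment `[a,b]` of `[n]₀ = {0,...,n}`: the set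
`{i : a ≤ i ≤ b}` if `a ≤ b`, and `{i : a ≤ i ≤ n} ∪ {i : 0 ≤ i ≤ b}` if `a > b`. -/
def CSeg (n a b : ℕ) : Finset ℕ :=
  if a ≤ b then Finset.Icc a b else Finset.Icc a n ∪ Finset.Icc 0 b

/-- `(a, b)` are the endpoints of a genuine cyclic segment of `[n]₀`: `a, b ∈ [n]₀`
and `[a,b]` is a proper subset of `[n]₀`. -/
def IsCSeg (n a b : ℕ) : Prop :=
  a ≤ n ∧ b ≤ n ∧ CSeg n a b ⊂ Finset.range (n + 1)

/-- `[c,d]` overlaps `[a,b]`: `c > a` and the two cyclic segments are neither disjoint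
nor comparable with respect to inclusion. -/
def COverlaps (n a b c d : ℕ) : Prop :=
  c > a ∧ (CSeg n a b ∩ CSeg n c d).Nonempty ∧
    ¬ CSeg n a b ⊆ CSeg n c d ∧ ¬ CSeg n c d ⊆ CSeg n a b

/-- `[c,d]` follows `[a,b]`: `b ⊞ 1 = c`, where `⊞` is addition modulo `n + 1`. -/
def CFollows (n a b c d : ℕ) : Prop :=
  (b + 1) % (n + 1) = c

/-- `[a,b]` precedes `[c,d]`: `[c,d]` overlaps `[a,b]` or `[c,d]` follows `[a,b]`. -/
def CPrecedes (n a b c d : ℕ) : Prop :=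
  COverlaps n a b c d ∨ CFollows n a b c d

/-!
Unfolding membership in `CSeg n a b` into inequalities between endpoints turns every step into
linear arithmetic. If `[c,d] ⊄ [a,b]` starts inside `[a,b]` or right after it, the union is
`[a,d]`, or all of `[n]₀` when `d ∈ [a,b]`; of two intersecting segments, one starts inside the
other. Conversely, incomparable intersecting segments have different left endpoints, so the one
starting later overlaps the other; and disjoint segments whose union is a segment `[e,f]` are
adjacent, since otherwise `b` and `d` would both be its last point `f`.
-/

namespace CSeg

variable {n a b c d e f i : ℕ}

theorem mem_iff (hb : b ≤ n) :
    i ∈ CSeg n a b ↔ (a ≤ b ∧ a ≤ i ∧ i ≤ b) ∨ (b < a ∧ i ≤ n ∧ (a ≤ i ∨ i ≤ b)) := by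
  unfold CSeg
  split <;> simp only [Finset.mem_union, Finset.mem_Icc] <;> omega

theorem add_one_mod_cases (hb : b ≤ n) :
    (b = n ∧ (b + 1) % (n + 1) = 0) ∨ (b < n ∧ (b + 1) % (n + 1) = b + 1) := by
  rcases hb.eq_or_lt with rfl | h
  · exact .inl ⟨rfl, Nat.mod_self _⟩
  · exact .inr ⟨h, Nat.mod_eq_of_lt (by omega)⟩

theorem subset_range (hb : b ≤ n) : CSeg n a b ⊆ Finset.range (n + 1) := by
  intro i hi
  rw [mem_iff hb] at hi
  rw [Finset.mem_range]
  omega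

theorem zero_self : CSeg n 0 n = Finset.range (n + 1) := by
  ext i
  rw [mem_iff le_rfl, Finset.mem_range]
  omega

theorem _root_.isCSeg_iff :
    IsCSeg n a b ↔ a ≤ n ∧ b ≤ n ∧ ¬(a = 0 ∧ b = n) ∧ (b < a → b + 2 ≤ a) := by
  refine ⟨fun ⟨ha, hb, hss⟩ => ?_, fun ⟨ha, hb, hfull, hgap⟩ => ⟨ha, hb, ?_⟩⟩
  · obtain ⟨x, hx, hxX⟩ := Finset.exists_of_ssubset hss
    rw [Finset.mem_range] at hx
    rw [mem_iff hb] at hxX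
    omega
  · refine (Finset.ssubset_iff_of_subset (subset_range hb)).2 ?_
    by_cases h : a ≤ b ∧ a ≠ 0
    · exact ⟨0, by simp, by rw [mem_iff hb]; omega⟩
    · exact ⟨b + 1, by rw [Finset.mem_range]; omega, by rw [mem_iff hb]; omega⟩

theorem isCSeg_or_eq_range_iff {s : Finset ℕ} :
    ((∃ e f, IsCSeg n e f ∧ s = CSeg n e f) ∨ s = Finset.range (n + 1)) ↔
      ∃ e ≤ n, ∃ f ≤ n, s = CSeg n e f := by
  constructor
  · rintro (⟨e, f, ⟨he, hf, -⟩, rfl⟩ | rfl)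
    exacts [⟨e, he, f, hf, rfl⟩, ⟨0, n.zero_le, n, le_rfl, zero_self.symm⟩]
  · rintro ⟨e, he, f, hf, rfl⟩
    by_cases h : CSeg n e f = Finset.range (n + 1)
    · exact .inr h
    · exact .inl ⟨e, f, ⟨he, hf, (subset_range hf).ssubset_of_ne h⟩, rfl⟩

theorem left_mem (ha : a ≤ n) : a ∈ CSeg n a b := by
  unfold CSeg
  split <;> simp only [Finset.mem_union, Finset.mem_Icc] <;> omega

theorem right_mem : b ∈ CSeg n a b := by
  unfold CSeg
  split <;> simp only [Finset.mem_union, Finset.mem_Icc] <;> omega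

theorem add_one_mod_notMem (hX : IsCSeg n a b) : (b + 1) % (n + 1) ∉ CSeg n a b := by
  obtain ⟨ha, hb, hfull, hgap⟩ := isCSeg_iff.1 hX
  rw [mem_iff hb]
  rcases add_one_mod_cases hb with ⟨_, h⟩ | ⟨_, h⟩ <;> rw [h] <;> omega

theorem mem_of_add_one_mod_mem (hb : b ≤ n) (hc : c ≤ n) (hd : d ≤ n)
    (h : (b + 1) % (n + 1) ∈ CSeg n c d) (hcs : (b + 1) % (n + 1) ≠ c) : b ∈ CSeg n c d := by
  rw [mem_iff hd] at h ⊢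
  rcases add_one_mod_cases hb with ⟨_, hs⟩ | ⟨_, hs⟩ <;> rw [hs] at h hcs <;> omega

theorem eq_of_mem_of_add_one_mod_notMem (hb : b ≤ n) (hf : f ≤ n) (h : b ∈ CSeg n e f)
    (hs : (b + 1) % (n + 1) ∉ CSeg n e f) : b = f := by
  rw [mem_iff hf] at h hs
  rcases add_one_mod_cases hb with ⟨_, h'⟩ | ⟨_, h'⟩ <;> rw [h'] at hs <;> omega

theorem subset_or_subset_of_same_left (hb : b ≤ n) (hd : d ≤ n) :
    CSeg n a b ⊆ CSeg n a d ∨ CSeg n a d ⊆ CSeg n a b := by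
  by_cases h : d ∈ CSeg n a b
  · refine .inr fun i hi => ?_
    rw [mem_iff hb] at h ⊢
    rw [mem_iff hd] at hi
    omega
  · refine .inl fun i hi => ?_
    rw [mem_iff hb] at h hi
    rw [mem_iff hd]
    omega

theorem left_mem_or_left_mem_of_inter_nonempty (ha : a ≤ n) (hb : b ≤ n) (hc : c ≤ n)
    (hd : d ≤ n) (h : (CSeg n a b ∩ CSeg n c d).Nonempty) :
    c ∈ CSeg n a b ∨ a ∈ CSeg n c d := by
  obtain ⟨x, hx⟩ := h
  rw [Finset.mem_inter, mem_iff hb, mem_iff hd] at hx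
  rw [mem_iff hb, mem_iff hd]
  omega

theorem union_eq_of_left_mem_or_follows (hX : IsCSeg n a b) (hd : d ≤ n)
    (hcX : c ∈ CSeg n a b ∨ (b + 1) % (n + 1) = c) (hYX : ¬ CSeg n c d ⊆ CSeg n a b) :
    ∃ e ≤ n, ∃ f ≤ n, CSeg n a b ∪ CSeg n c d = CSeg n e f := by
  obtain ⟨ha, hb, hfull, hgap⟩ := isCSeg_iff.1 hX
  obtain ⟨y, hyY, hyX⟩ := Finset.not_subset.1 hYX
  rw [mem_iff hd] at hyY
  rw [mem_iff hb] at hyX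
  have hc : (a ≤ b ∧ a ≤ c ∧ c ≤ b) ∨ (b < a ∧ c ≤ n ∧ (a ≤ c ∨ c ≤ b)) ∨
      (b = n ∧ c = 0) ∨ (b < n ∧ c = b + 1) := by
    rcases hcX with h | rfl
    · have := (mem_iff hb).1 h
      omega
    · rcases add_one_mod_cases hb with h | h <;> omega
  by_cases hdX : d ∈ CSeg n a b
  · rw [mem_iff hb] at hdX
    refine ⟨0, n.zero_le, n, le_rfl, ?_⟩
    ext i
    simp only [Finset.mem_union, mem_iff hb, mem_iff hd, mem_iff le_rfl]
    omega
  · rw [mem_iff hb] at hdX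
    refine ⟨a, ha, d, hd, ?_⟩
    ext i
    simp only [Finset.mem_union, mem_iff hb, mem_iff hd]
    omega

theorem add_one_mod_notMem_union (hX : IsCSeg n a b) (hd : d ≤ n) (hc : c ≤ n)
    (hXY : Disjoint (CSeg n a b) (CSeg n c d)) (hcs : (b + 1) % (n + 1) ≠ c) :
    (b + 1) % (n + 1) ∉ CSeg n a b ∪ CSeg n c d := by
  rw [Finset.mem_union, not_or]
  refine ⟨add_one_mod_notMem hX, fun h => ?_⟩
  have hb := hX.2.1
  exact Finset.disjoint_left.1 hXY right_mem (mem_of_add_one_mod_mem hb hc hd h hcs)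

end CSeg

section

open CSeg

variable {n a b c d : ℕ}

theorem CFollows.not_subset (hX : IsCSeg n a b) (hY : IsCSeg n c d) (h : CFollows n a b c d) :
    ¬ CSeg n a b ⊆ CSeg n c d ∧ ¬ CSeg n c d ⊆ CSeg n a b := by
  have hb := hX.2.1
  obtain ⟨hc, hd, hfull, hgap⟩ := isCSeg_iff.1 hY
  refine ⟨fun hXY => ?_, fun hYX => add_one_mod_notMem hX (h ▸ hYX (left_mem hc))⟩
  have hbY := hXY right_mem
  rw [mem_iff hd] at hbY
  unfold CFollows at h
  rcases add_one_mod_cases hb with ⟨_, hs⟩ | ⟨_, hs⟩ <;> rw [hs] at h <;> omega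

theorem CPrecedes.not_subset (hX : IsCSeg n a b) (hY : IsCSeg n c d) (h : CPrecedes n a b c d) :
    ¬ CSeg n a b ⊆ CSeg n c d ∧ ¬ CSeg n c d ⊆ CSeg n a b := by
  rcases h with ⟨-, -, hXY, hYX⟩ | h
  exacts [⟨hXY, hYX⟩, h.not_subset hX hY]

theorem CPrecedes.exists_union_eq (hX : IsCSeg n a b) (hY : IsCSeg n c d)
    (h : CPrecedes n a b c d) : ∃ e ≤ n, ∃ f ≤ n, CSeg n a b ∪ CSeg n c d = CSeg n e f := by
  obtain ⟨hXY, hYX⟩ := h.not_subset hX hY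
  obtain ⟨ha, hb, -⟩ := isCSeg_iff.1 hX
  obtain ⟨hc, hd, -⟩ := isCSeg_iff.1 hY
  rcases h with ⟨-, hXY', -⟩ | h
  · rcases left_mem_or_left_mem_of_inter_nonempty ha hb hc hd hXY' with hcX | haY
    · exact union_eq_of_left_mem_or_follows hX hd (.inl hcX) hYX
    · rw [Finset.union_comm]
      exact union_eq_of_left_mem_or_follows hY hb (.inl haY) hXY
  · exact union_eq_of_left_mem_or_follows hX hd (.inr h) hYX

theorem cFollows_or_cFollows_of_disjoint (hX : IsCSeg n a b) (hY : IsCSeg n c d)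
    (hXY : Disjoint (CSeg n a b) (CSeg n c d))
    (hU : ∃ e ≤ n, ∃ f ≤ n, CSeg n a b ∪ CSeg n c d = CSeg n e f) :
    CFollows n a b c d ∨ CFollows n c d a b := by
  obtain ⟨e, -, f, hf, hU⟩ := hU
  by_contra! h
  obtain ⟨hab, hcd⟩ := h
  have hb := hX.2.1
  have hd := hY.2.1
  have hbf : b = f := by
    refine eq_of_mem_of_add_one_mod_notMem (e := e) hb hf ?_ ?_ <;> rw [← hU]
    exacts [Finset.mem_union_left _ right_mem,
      add_one_mod_notMem_union hX hd hY.1 hXY hab]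
  have hdf : d = f := by
    refine eq_of_mem_of_add_one_mod_notMem (e := e) hd hf ?_ ?_ <;> rw [← hU, Finset.union_comm]
    exacts [Finset.mem_union_left _ right_mem,
      add_one_mod_notMem_union hY hb hX.1 hXY.symm hcd]
  exact Finset.disjoint_left.1 hXY right_mem (hbf ▸ hdf ▸ right_mem)

theorem cPrecedes_or_cPrecedes_of_not_subset (hX : IsCSeg n a b) (hY : IsCSeg n c d)
    (hXY : ¬ CSeg n a b ⊆ CSeg n c d) (hYX : ¬ CSeg n c d ⊆ CSeg n a b)
    (hU : ∃ e ≤ n, ∃ f ≤ n, CSeg n a b ∪ CSeg n c d = CSeg n e f) :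
    CPrecedes n a b c d ∨ CPrecedes n c d a b := by
  by_cases hI : (CSeg n a b ∩ CSeg n c d).Nonempty
  · have hac : a ≠ c := by
      rintro rfl
      rcases subset_or_subset_of_same_left hX.2.1 hY.2.1 with h | h
      exacts [hXY h, hYX h]
    rcases hac.lt_or_gt with h | h
    · exact .inl (.inl ⟨h, hI, hXY, hYX⟩)
    · exact .inr (.inl ⟨h, by rwa [Finset.inter_comm], hYX, hXY⟩)
  · rw [Finset.not_nonempty_iff_eq_empty, ← Finset.disjoint_iff_inter_eq_empty] at hI
    exact (cFollows_or_cFollows_of_disjoint hX hY hI hU).imp .inr .inr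

end

theorem cyclic_segments_separation_criterion_general (n : ℕ)
    (a b c d : ℕ) (hX : IsCSeg n a b) (hY : IsCSeg n c d) :
    ((¬ CSeg n a b ⊆ CSeg n c d ∧ ¬ CSeg n c d ⊆ CSeg n a b) ∧
        ((∃ e f : ℕ, IsCSeg n e f ∧ CSeg n a b ∪ CSeg n c d = CSeg n e f) ∨
          CSeg n a b ∪ CSeg n c d = Finset.range (n + 1))) ↔
      (CPrecedes n a b c d ∨ CPrecedes n c d a b) := by
  rw [CSeg.isCSeg_or_eq_range_iff]
  constructor
  · rintro ⟨⟨hXY, hYX⟩, hU⟩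
    exact cPrecedes_or_cPrecedes_of_not_subset hX hY hXY hYX hU
  · rintro (h | h)
    · exact ⟨h.not_subset hX hY, h.exists_union_eq hX hY⟩
    · rw [Finset.union_comm]
      exact ⟨(h.not_subset hY hX).symm, h.exists_union_eq hY hX⟩

/-- Proposition (cyclohedron): two cyclic segments are incomparable with union a cyclic
segment of `[n]₀` or all of `[n]₀` if and only if one of them precedes the other. -/
theorem cyclic_segments_separation_criterion (n : ℕ) (hn : 1 ≤ n)
    (a b c d : ℕ) (hX : IsCSeg n a b) (hY : IsCSeg n c d) :
    ((¬ CSeg n a b ⊆ CSeg n c d ∧ ¬ CSeg n c d ⊆ CSeg n a b) ∧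
        ((∃ e f : ℕ, IsCSeg n e f ∧ CSeg n a b ∪ CSeg n c d = CSeg n e f) ∨
          CSeg n a b ∪ CSeg n c d = Finset.range (n + 1))) ↔
      (CPrecedes n a b c d ∨ CPrecedes n c d a b) :=
  cyclic_segments_separation_criterion_general n a b c d hX hY
end

section
/- The chromatic number of the n-dimensional cyclohedron is asymptotically n ln n; that is, the limit as n tends to infinity of γ_n/(n ln n) equals 1. -/
/-- `X` is a cyclic segment of `[n]₀` (as a set). -/
def IsCSegSet (n : ℕ) (X : Finset ℕ) : Prop :=
  ∃ a b : ℕ, IsCSeg n a b ∧ X = CSeg n a b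

/-- Two cyclic segments are separated when one of them precedes the other. -/
def CSegSeparated (n : ℕ) (X Y : Finset ℕ) : Prop :=
  ∃ a b c d : ℕ, IsCSeg n a b ∧ IsCSeg n c d ∧ X = CSeg n a b ∧ Y = CSeg n c d ∧
    (CPrecedes n a b c d ∨ CPrecedes n c d a b)

/-- A proper colouring of the `n`-dimensional cyclohedron with `m` colours:
a function from the cyclic segments of `[n]₀` to `{1,...,m}` such that any two
distinct cyclic segments of the same colour are separated. -/
def IsProperColouringCyclo (n m : ℕ) (f : Finset ℕ → ℕ) : Prop :=
  (∀ X, IsCSegSet n X → f X ∈ Finset.Icc 1 m) ∧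
  ∀ X Y, IsCSegSet n X → IsCSegSet n Y → X ≠ Y → f X = f Y → CSegSeparated n X Y

/-- The chromatic number `γ_n` of the `n`-dimensional cyclohedron. -/
noncomputable def cycloChromatic (n : ℕ) : ℕ :=
  sInf {m : ℕ | ∃ f : Finset ℕ → ℕ, IsProperColouringCyclo n m f}

/-!
A cyclic segment is an arc of `[n]₀` with a start `a` and a length `ℓ`, and two arcs are
separated exactly when one of them starts inside the other, or right after it, and reaches
beyond its end.

Upper bound: give the arc `(a, ℓ)` the colour `(ℓ, ⌊a / (ℓ + 1)⌋)`. Arcs of equal length whose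
starts differ by at most `ℓ` are separated, and this uses
`∑_{ℓ ≤ n} (⌊n / (ℓ + 1)⌋ + 1) ≤ n log (n + 1) + n` colours.

Lower bound: pairwise separated arcs of length at most `n / 3` all start within a window of
length `2 n / 3`, where the cycle can be cut open; there they form a chain of intervals whose
left and right ends both increase, so each of them has length at least the size of the family
minus one. Giving the arc `(a, ℓ)` the weight `1 / (ℓ + 1)`, every colour class weighs at most
`1`, while all arcs of length at most `n / 3` together weigh
`(n + 1) (H_{n/3+1} - 1) ≥ (n + 1) (log (n / 3) - 1)`.
-/

theorem CSegSeparated.symm {n : ℕ} {X Y : Finset ℕ} (h : CSegSeparated n X Y) :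
    CSegSeparated n Y X := by
  obtain ⟨a, b, c, d, hab, hcd, hX, hY, h⟩ := h
  exact ⟨c, d, a, b, hcd, hab, hY, hX, h.symm⟩

namespace Cyclo

/-- The forward distance from `a` to `c` around the cycle `[n]₀`; `n * a` stands for `-a`
modulo `n + 1`, which avoids truncated subtraction. -/
def gap (n a c : ℕ) : ℕ := (c + n * a) % (n + 1)

variable {n a c x ℓ ℓ' : ℕ}

lemma gap_lt (n a c : ℕ) : gap n a c < n + 1 := Nat.mod_lt _ n.succ_pos

lemma gap_add_modEq : gap n a c + a ≡ c [MOD n + 1] :=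
  calc gap n a c + a ≡ c + n * a + a [MOD n + 1] := Nat.ModEq.add_right _ (Nat.mod_modEq _ _)
    _ = c + (n + 1) * a := by ring
    _ ≡ c [MOD n + 1] := Nat.add_mul_mod_self_left _ _ _

lemma gap_eq_of_add_modEq {t : ℕ} (ht : t < n + 1) (h : t + a ≡ c [MOD n + 1]) :
    gap n a c = t :=
  Nat.ModEq.eq_of_lt_of_lt (Nat.ModEq.add_right_cancel' a (gap_add_modEq.trans h.symm))
    (gap_lt _ _ _) ht

lemma gap_eq_ite (ha : a ≤ n) (hc : c ≤ n) :
    gap n a c = if a ≤ c then c - a else c + (n + 1) - a := by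
  split_ifs with hac
  · exact gap_eq_of_add_modEq (by omega) (by rw [Nat.sub_add_cancel hac])
  · refine gap_eq_of_add_modEq (by omega) ?_
    rw [show c + (n + 1) - a + a = c + (n + 1) by omega]
    exact Nat.add_modEq_right

lemma gap_self : gap n a a = 0 := gap_eq_of_add_modEq n.succ_pos (by rw [zero_add])

lemma gap_add_gap_comm (ha : a ≤ n) (hc : c ≤ n) (hac : a ≠ c) :
    gap n a c + gap n c a = n + 1 := by
  rw [gap_eq_ite ha hc, gap_eq_ite hc ha]
  split_ifs <;> omega

/-- The triangle relation for distances around the cycle, as a disjunction `omega` can use. -/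
lemma gap_add_gap (n a c x : ℕ) :
    gap n a c + gap n c x = gap n a x ∨ gap n a c + gap n c x = gap n a x + (n + 1) := by
  have h : gap n a c + gap n c x + a ≡ x [MOD n + 1] :=
    calc gap n a c + gap n c x + a = gap n c x + (gap n a c + a) := by ring
      _ ≡ gap n c x + c [MOD n + 1] := Nat.ModEq.add_left _ gap_add_modEq
      _ ≡ x [MOD n + 1] := gap_add_modEq
  have := gap_lt n a c
  have := gap_lt n c x
  by_cases hs : gap n a c + gap n c x < n + 1
  · exact Or.inl (gap_eq_of_add_modEq hs h).symm
  · refine Or.inr ?_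
    have h' : gap n a c + gap n c x - (n + 1) + a ≡ x [MOD n + 1] :=
      calc _ ≡ gap n a c + gap n c x - (n + 1) + a + (n + 1) [MOD n + 1] :=
            Nat.add_modEq_right.symm
        _ = gap n a c + gap n c x + a := by omega
        _ ≡ x [MOD n + 1] := h
    have := gap_eq_of_add_modEq (by omega) h'
    omega

lemma gap_add_mod {t : ℕ} (ht : t < n + 1) : gap n a ((a + t) % (n + 1)) = t :=
  gap_eq_of_add_modEq ht (by rw [Nat.add_comm t a]; exact (Nat.mod_modEq _ _).symm)

lemma add_gap_mod (hc : c ≤ n) : (a + gap n a c) % (n + 1) = c := by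
  rw [add_comm]
  exact Eq.trans gap_add_modEq (Nat.mod_eq_of_lt (Nat.lt_succ_of_le hc))

lemma gap_eq_zero_iff (ha : a ≤ n) (hc : c ≤ n) : gap n a c = 0 ↔ a = c := by
  rw [gap_eq_ite ha hc]
  split_ifs <;> omega

def arc (n a ℓ : ℕ) : Finset ℕ := (Finset.range (n + 1)).filter (fun x => gap n a x < ℓ)

lemma mem_arc : x ∈ arc n a ℓ ↔ x ≤ n ∧ gap n a x < ℓ := by
  simp [arc]

lemma CSeg_eq_arc {b : ℕ} (ha : a ≤ n) (hb : b ≤ n) : CSeg n a b = arc n a (gap n a b + 1) := by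
  ext x
  rw [mem_arc, Nat.lt_succ_iff]
  by_cases hx : x ≤ n
  · rw [gap_eq_ite ha hb, gap_eq_ite ha hx, CSeg]
    split_ifs <;> simp <;> omega
  · simp only [CSeg, hx, false_and, iff_false]
    split_ifs <;> simp <;> omega

lemma isCSeg_iff {b : ℕ} : IsCSeg n a b ↔ a ≤ n ∧ b ≤ n ∧ gap n a b < n := by
  refine and_congr_right fun ha => and_congr_right fun hb => ?_
  have hsub : arc n a (gap n a b + 1) ⊆ Finset.range (n + 1) := Finset.filter_subset _ _
  rw [CSeg_eq_arc ha hb, Finset.ssubset_iff_of_subset hsub]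
  constructor
  · rintro ⟨x, hxn, hx⟩
    have := gap_lt n a x
    rw [mem_arc] at hx
    rw [Finset.mem_range] at hxn
    omega
  · intro h
    refine ⟨(a + n) % (n + 1), Finset.mem_range.2 (Nat.mod_lt _ n.succ_pos), ?_⟩
    rw [mem_arc, gap_add_mod n.lt_succ_self]
    omega

lemma arc_subset_arc_iff (ha : a ≤ n) (hc : c ≤ n) (hℓ : 1 ≤ ℓ) (hℓ' : ℓ' ≤ n) :
    arc n a ℓ ⊆ arc n c ℓ' ↔ gap n c a + ℓ ≤ ℓ' := by
  constructor
  · intro hsub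
    have hy : (c + ℓ') % (n + 1) ∉ arc n a ℓ := fun hy => by
      have := (mem_arc.1 (hsub hy)).2
      rw [gap_add_mod (Nat.lt_succ_of_le hℓ')] at this
      exact lt_irrefl _ this
    have hca := (mem_arc.1 (hsub (mem_arc.2 ⟨ha, by rw [gap_self]; exact hℓ⟩))).2
    simp only [mem_arc, not_and, not_lt] at hy
    have hout := hy (Nat.lt_succ_iff.1 (Nat.mod_lt _ n.succ_pos))
    have htri := gap_add_gap n a c ((c + ℓ') % (n + 1))
    rw [gap_add_mod (Nat.lt_succ_of_le hℓ')] at htri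
    have := gap_lt n a ((c + ℓ') % (n + 1))
    rcases eq_or_ne a c with rfl | hac
    · rw [gap_self] at htri ⊢
      omega
    · have := gap_add_gap_comm ha hc hac
      omega
  · intro h y hy
    rw [mem_arc] at hy ⊢
    refine ⟨hy.1, ?_⟩
    rcases gap_add_gap n c a y with h' | h' <;> omega

lemma arc_injective (ha : a ≤ n) (hc : c ≤ n) (hℓ : 1 ≤ ℓ) (hℓn : ℓ ≤ n) (hℓ' : 1 ≤ ℓ')
    (hℓ'n : ℓ' ≤ n) (h : arc n a ℓ = arc n c ℓ') : a = c ∧ ℓ = ℓ' := by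
  have h₁ := (arc_subset_arc_iff ha hc hℓ hℓ'n).1 h.le
  have h₂ := (arc_subset_arc_iff hc ha hℓ' hℓn).1 h.ge
  have hac : a = c := (gap_eq_zero_iff ha hc).1 (by omega)
  exact ⟨hac, by omega⟩

lemma gap_lt_or_gap_lt_of_inter (h : (arc n a ℓ ∩ arc n c ℓ').Nonempty) (ha : a ≤ n)
    (hc : c ≤ n) : gap n a c < ℓ ∨ gap n c a < ℓ' := by
  obtain ⟨x, hx⟩ := h
  rw [Finset.mem_inter, mem_arc, mem_arc] at hx
  have htri := gap_add_gap n a c x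
  have := gap_lt n a x
  rcases eq_or_ne a c with rfl | hac
  · rw [gap_self]
    omega
  · have := gap_add_gap_comm ha hc hac
    omega

lemma arcs_cross_iff (ha : a ≤ n) (hc : c ≤ n) (hℓ : 1 ≤ ℓ) (hℓn : ℓ ≤ n) (hℓ' : 1 ≤ ℓ')
    (hℓ'n : ℓ' ≤ n) :
    ((arc n a ℓ ∩ arc n c ℓ').Nonempty ∧ ¬ arc n a ℓ ⊆ arc n c ℓ' ∧ ¬ arc n c ℓ' ⊆ arc n a ℓ) ↔
      a ≠ c ∧ (gap n a c < ℓ ∧ ℓ < gap n a c + ℓ' ∨ gap n c a < ℓ' ∧ ℓ' < gap n c a + ℓ) := by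
  rw [arc_subset_arc_iff ha hc hℓ hℓ'n, arc_subset_arc_iff hc ha hℓ' hℓn]
  constructor
  · rintro ⟨hint, h₁, h₂⟩
    have := gap_lt_or_gap_lt_of_inter hint ha hc
    rcases eq_or_ne a c with rfl | hac
    · rw [gap_self] at h₁ h₂
      omega
    · exact ⟨hac, by omega⟩
  · rintro ⟨hac, h⟩
    have := gap_add_gap_comm ha hc hac
    refine ⟨?_, by omega, by omega⟩
    rcases h with h | h
    · exact ⟨c, Finset.mem_inter.2 ⟨mem_arc.2 ⟨hc, h.1⟩, mem_arc.2 ⟨hc, by rw [gap_self]; omega⟩⟩⟩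
    · exact ⟨a, Finset.mem_inter.2 ⟨mem_arc.2 ⟨ha, by rw [gap_self]; omega⟩, mem_arc.2 ⟨ha, h.1⟩⟩⟩

def arcEnd (n a ℓ : ℕ) : ℕ := (a + (ℓ - 1)) % (n + 1)

lemma arcEnd_le : arcEnd n a ℓ ≤ n := Nat.lt_succ_iff.1 (Nat.mod_lt _ n.succ_pos)

lemma gap_arcEnd (hℓ : 1 ≤ ℓ) (hℓn : ℓ ≤ n) : gap n a (arcEnd n a ℓ) = ℓ - 1 :=
  gap_add_mod (by omega)

lemma arcEnd_gap_add_one {b : ℕ} (hb : b ≤ n) : arcEnd n a (gap n a b + 1) = b :=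
  add_gap_mod hb

lemma isCSeg_arcEnd (ha : a ≤ n) (hℓ : 1 ≤ ℓ) (hℓn : ℓ ≤ n) : IsCSeg n a (arcEnd n a ℓ) :=
  isCSeg_iff.2 ⟨ha, arcEnd_le, by rw [gap_arcEnd hℓ hℓn]; omega⟩

lemma CSeg_arcEnd (ha : a ≤ n) (hℓ : 1 ≤ ℓ) (hℓn : ℓ ≤ n) :
    CSeg n a (arcEnd n a ℓ) = arc n a ℓ := by
  rw [CSeg_eq_arc ha arcEnd_le, gap_arcEnd hℓ hℓn, Nat.sub_add_cancel hℓ]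

lemma cFollows_arcEnd_iff {d : ℕ} (hc : c ≤ n) (hℓ : 1 ≤ ℓ) (hℓn : ℓ ≤ n) :
    CFollows n a (arcEnd n a ℓ) c d ↔ gap n a c = ℓ := by
  rw [CFollows, arcEnd, Nat.mod_add_mod, Nat.add_assoc, Nat.sub_add_cancel hℓ]
  constructor
  · rintro rfl
    exact gap_add_mod (by omega)
  · intro h
    rw [← h, add_gap_mod hc]

lemma isCSegSet_iff {X : Finset ℕ} :
    IsCSegSet n X ↔ ∃ a ℓ, a ≤ n ∧ 1 ≤ ℓ ∧ ℓ ≤ n ∧ X = arc n a ℓ := by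
  constructor
  · rintro ⟨a, b, hab, rfl⟩
    obtain ⟨ha, hb, hgap⟩ := isCSeg_iff.1 hab
    exact ⟨a, gap n a b + 1, ha, by omega, by omega, CSeg_eq_arc ha hb⟩
  · rintro ⟨a, ℓ, ha, hℓ, hℓn, rfl⟩
    exact ⟨a, arcEnd n a ℓ, isCSeg_arcEnd ha hℓ hℓn, (CSeg_arcEnd ha hℓ hℓn).symm⟩

lemma cSegSeparated_arc_iff_cPrecedes (ha : a ≤ n) (hc : c ≤ n) (hℓ : 1 ≤ ℓ) (hℓn : ℓ ≤ n)
    (hℓ' : 1 ≤ ℓ') (hℓ'n : ℓ' ≤ n) :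
    CSegSeparated n (arc n a ℓ) (arc n c ℓ') ↔
      CPrecedes n a (arcEnd n a ℓ) c (arcEnd n c ℓ') ∨
        CPrecedes n c (arcEnd n c ℓ') a (arcEnd n a ℓ) := by
  constructor
  · rintro ⟨p, q, r, s, hpq, hrs, hX, hY, h⟩
    obtain ⟨hp, hq, hpq⟩ := isCSeg_iff.1 hpq
    obtain ⟨hr, hs, hrs⟩ := isCSeg_iff.1 hrs
    rw [CSeg_eq_arc hp hq] at hX
    rw [CSeg_eq_arc hr hs] at hY
    obtain ⟨rfl, rfl⟩ := arc_injective ha hp hℓ hℓn (by omega) (by omega) hX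
    obtain ⟨rfl, rfl⟩ := arc_injective hc hr hℓ' hℓ'n (by omega) (by omega) hY
    rwa [arcEnd_gap_add_one hq, arcEnd_gap_add_one hs]
  · intro h
    exact ⟨a, _, c, _, isCSeg_arcEnd ha hℓ hℓn, isCSeg_arcEnd hc hℓ' hℓ'n,
      (CSeg_arcEnd ha hℓ hℓn).symm, (CSeg_arcEnd hc hℓ' hℓ'n).symm, h⟩

/-- The cyclic version of the paper's "`[a,b]` precedes `[c,d]`", in terms of start points
and lengths. -/
def ArcPrecedes (n a ℓ c ℓ' : ℕ) : Prop := gap n a c ≤ ℓ ∧ ℓ < gap n a c + ℓ'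

def ArcSeparated (n a ℓ c ℓ' : ℕ) : Prop :=
  a ≠ c ∧ (ArcPrecedes n a ℓ c ℓ' ∨ ArcPrecedes n c ℓ' a ℓ)

theorem cSegSeparated_arc_iff (ha : a ≤ n) (hc : c ≤ n) (hℓ : 1 ≤ ℓ) (hℓn : ℓ ≤ n)
    (hℓ' : 1 ≤ ℓ') (hℓ'n : ℓ' ≤ n) :
    CSegSeparated n (arc n a ℓ) (arc n c ℓ') ↔ ArcSeparated n a ℓ c ℓ' := by
  rw [cSegSeparated_arc_iff_cPrecedes ha hc hℓ hℓn hℓ' hℓ'n, CPrecedes, CPrecedes, COverlaps,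
    COverlaps, CSeg_arcEnd ha hℓ hℓn, CSeg_arcEnd hc hℓ' hℓ'n, cFollows_arcEnd_iff hc hℓ hℓn,
    cFollows_arcEnd_iff ha hℓ' hℓ'n, arcs_cross_iff ha hc hℓ hℓn hℓ' hℓ'n,
    arcs_cross_iff hc ha hℓ' hℓ'n hℓ hℓn, ArcSeparated, ArcPrecedes, ArcPrecedes]
  rcases eq_or_ne a c with rfl | hac
  · simp only [gap_self]
    omega
  · have := gap_add_gap_comm ha hc hac
    omega

theorem card_le_of_chain {ι : Type*} {C : Finset ι} {x e : ι → ℕ} (hx : Set.InjOn x C)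
    (hchain : ∀ q ∈ C, ∀ r ∈ C, x q < x r → x r ≤ e q ∧ e q < e r) {u : ι} (hu : u ∈ C) :
    C.card ≤ e u - x u + 1 := by
  classical
  obtain ⟨z, hz, hzmax⟩ := C.exists_max_image x ⟨u, hu⟩
  set P := C.filter (fun q => x q < x u)
  set Q := C.filter (fun q => x u < x q)
  have hcover : C ⊆ insert u (P ∪ Q) := by
    intro q hq
    rcases lt_trichotomy (x q) (x u) with h | h | h
    · simp [P, hq, h]
    · simp [hx hq hu h]
    · simp [Q, hq, h]
  -- left of `u` count right ends in `[x z, e u)`, right of `u` count left ends in `(x u, x z]`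
  have hP : P.card ≤ (Finset.Ico (x z) (e u)).card := by
    refine Finset.card_le_card_of_injOn e (fun q hq => ?_) (fun q hq r hr hqr => ?_)
    · simp only [P, Finset.coe_filter, Set.mem_ofPred_eq] at hq
      have hzq : x q < x z := lt_of_lt_of_le hq.2 (hzmax u hu)
      simpa using ⟨(hchain q hq.1 z hz hzq).1, (hchain q hq.1 u hu hq.2).2⟩
    · simp only [P, Finset.coe_filter, Set.mem_ofPred_eq] at hq hr
      refine hx hq.1 hr.1 (le_antisymm ?_ ?_) <;> by_contra! hlt
      · exact (hchain r hr.1 q hq.1 hlt).2.ne' hqr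
      · exact (hchain q hq.1 r hr.1 hlt).2.ne hqr
  have hQ : Q.card ≤ (Finset.Ioc (x u) (x z)).card := by
    refine Finset.card_le_card_of_injOn x (fun q hq => ?_) 
      (hx.mono (Finset.coe_subset.2 (Finset.filter_subset _ _)))
    simp only [Q, Finset.coe_filter, Set.mem_ofPred_eq] at hq
    simpa using ⟨hq.2, hzmax q hq.1⟩
  have hzu : x u < x z → x z ≤ e u := fun h => (hchain u hu z hz h).1
  have := hzmax u hu
  have := (Finset.card_le_card hcover).trans
    ((Finset.card_insert_le _ _).trans (Nat.succ_le_succ (Finset.card_union_le P Q)))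
  simp only [Nat.card_Ico, Nat.card_Ioc] at hP hQ
  omega

variable {b K : ℕ}

lemma gap_le_two_mul_of_arcSeparated (ha : a ≤ n) (hc : c ≤ n)
    (hba : gap n b a = K) (hℓ : ℓ ≤ K) (hℓ' : ℓ' ≤ K) (hsep : ArcSeparated n a ℓ c ℓ') :
    gap n b c ≤ 2 * K := by
  obtain ⟨hac, hprec⟩ := hsep
  have := gap_add_gap_comm ha hc hac
  have := gap_add_gap n b a c
  have := gap_lt n b c
  unfold ArcPrecedes at hprec
  omega

/-- Inside a window of length `2K` the cycle reads linearly. -/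
lemma gap_le_and_lt_of_arcSeparated (hK : 3 * K ≤ n) (ha : a ≤ n) (hc : c ≤ n)
    (hlt : gap n b a < gap n b c) (hbc : gap n b c ≤ 2 * K) (hℓ' : ℓ' ≤ K)
    (hsep : ArcSeparated n a ℓ c ℓ') :
    gap n b c ≤ gap n b a + ℓ ∧ gap n b a + ℓ < gap n b c + ℓ' := by
  obtain ⟨hac, hprec⟩ := hsep
  have := gap_add_gap_comm ha hc hac
  have := gap_add_gap n b a c
  have := gap_lt n a c
  unfold ArcPrecedes at hprec
  omega

theorem card_le_length_add_one (hK : 3 * K ≤ n) {C : Finset (ℕ × ℕ)}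
    (hC : ∀ p ∈ C, p.1 ≤ n ∧ 1 ≤ p.2 ∧ p.2 ≤ K)
    (hsep : (C : Set (ℕ × ℕ)).Pairwise fun p q => CSegSeparated n (arc n p.1 p.2) (arc n q.1 q.2))
    {u : ℕ × ℕ} (hu : u ∈ C) : C.card ≤ u.2 + 1 := by
  have hsep' : ∀ p ∈ C, ∀ q ∈ C, p ≠ q → ArcSeparated n p.1 p.2 q.1 q.2 := fun p hp q hq hpq =>
    (cSegSeparated_arc_iff (hC p hp).1 (hC q hq).1 (hC p hp).2.1 (by linarith [(hC p hp).2.2])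
      (hC q hq).2.1 (by linarith [(hC q hq).2.2])).1 (hsep hp hq hpq)
  have hinj : ∀ p ∈ C, ∀ q ∈ C, p.1 = q.1 → p = q := fun p hp q hq h =>
    by_contra fun hpq => (hsep' p hp q hq hpq).1 h
  obtain ⟨hu₁, hu₂, hu₃⟩ := hC u hu
  -- Measured from `b`, `K` steps before the start of `u`, all starts lie in `[0, 2K]`.
  set b := (u.1 + (n + 1 - K)) % (n + 1)
  have hb : b ≤ n := Nat.lt_succ_iff.1 (Nat.mod_lt _ n.succ_pos)
  have hbu : gap n b u.1 = K := by
    have h₁ : gap n u.1 b = n + 1 - K := gap_add_mod (by omega)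
    have h₂ := gap_add_gap_comm hb hu₁ (fun h => by rw [← h, gap_self] at h₁; omega)
    omega
  have hwindow : ∀ q ∈ C, gap n b q.1 ≤ 2 * K := by
    intro q hq
    rcases eq_or_ne u q with rfl | huq
    · omega
    exact gap_le_two_mul_of_arcSeparated hu₁ (hC q hq).1 hbu hu₃ (hC q hq).2.2
      (hsep' u hu q hq huq)
  have hchain : ∀ q ∈ C, ∀ r ∈ C, gap n b q.1 < gap n b r.1 →
      gap n b r.1 ≤ gap n b q.1 + q.2 ∧ gap n b q.1 + q.2 < gap n b r.1 + r.2 :=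
    fun q hq r hr hlt => gap_le_and_lt_of_arcSeparated hK (hC q hq).1 (hC r hr).1 hlt
      (hwindow r hr) (hC r hr).2.2 (hsep' q hq r hr (by rintro rfl; exact hlt.ne rfl))
  have hxinj : Set.InjOn (fun p : ℕ × ℕ => gap n b p.1) C := by
    intro p hp q hq h
    apply hinj p hp q hq
    rw [← add_gap_mod (a := b) (hC p hp).1, ← add_gap_mod (a := b) (hC q hq).1]
    exact congrArg (fun t => (b + t) % (n + 1)) h
  have := card_le_of_chain (e := fun p => gap n b p.1 + p.2) hxinj hchain hu
  omega

lemma sum_inv_length_le_one (hK : 3 * K ≤ n) {C : Finset (ℕ × ℕ)}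
    (hC : ∀ p ∈ C, p.1 ≤ n ∧ 1 ≤ p.2 ∧ p.2 ≤ K)
    (hsep : (C : Set (ℕ × ℕ)).Pairwise fun p q => CSegSeparated n (arc n p.1 p.2) (arc n q.1 q.2)) :
    ∑ p ∈ C, ((p.2 : ℝ) + 1)⁻¹ ≤ 1 := by
  rcases C.eq_empty_or_nonempty with rfl | hne
  · simp
  have hcard : (C.card : ℝ) ≠ 0 := Nat.cast_ne_zero.2 hne.card_pos.ne'
  calc ∑ p ∈ C, ((p.2 : ℝ) + 1)⁻¹ ≤ C.card • (C.card : ℝ)⁻¹ := by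
        refine Finset.sum_le_card_nsmul _ _ _ fun p hp => inv_anti₀ (by positivity) ?_
        exact_mod_cast card_le_length_add_one hK hC hsep hp
    _ = 1 := by rw [nsmul_eq_mul, mul_inv_cancel₀ hcard]

/-- Each colour class carries weight at most `1` when the arc `(a, ℓ)` gets weight `1 / (ℓ + 1)`. -/
theorem mul_sum_inv_le_of_isProperColouring {m K : ℕ} {f : Finset ℕ → ℕ}
    (hf : IsProperColouringCyclo n m f) (hK : 3 * K ≤ n) :
    ((n : ℝ) + 1) * ∑ ℓ ∈ Finset.Icc 1 K, ((ℓ : ℝ) + 1)⁻¹ ≤ m := by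
  classical
  set P := Finset.range (n + 1) ×ˢ Finset.Icc 1 K
  have hP : ∀ p ∈ P, p.1 ≤ n ∧ 1 ≤ p.2 ∧ p.2 ≤ K := fun p hp => by
    simp only [P, Finset.mem_product, Finset.mem_range, Finset.mem_Icc] at hp
    omega
  have hseg : ∀ p ∈ P, IsCSegSet n (arc n p.1 p.2) := fun p hp =>
    isCSegSet_iff.2 ⟨p.1, p.2, (hP p hp).1, (hP p hp).2.1, by linarith [(hP p hp).2.2], rfl⟩
  have hcol : ∀ p ∈ P, f (arc n p.1 p.2) ∈ Finset.Icc 1 m := fun p hp => hf.1 _ (hseg p hp)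
  have hclass : ∀ c ∈ Finset.Icc 1 m,
      ∑ p ∈ P with f (arc n p.1 p.2) = c, ((p.2 : ℝ) + 1)⁻¹ ≤ 1 := by
    intro c _
    refine sum_inv_length_le_one hK (fun p hp => hP p (Finset.mem_filter.1 hp).1) ?_
    intro p hp q hq hpq
    simp only [Finset.coe_filter, Set.mem_ofPred_eq] at hp hq
    obtain ⟨hp₁, hp₂, hp₃⟩ := hP p hp.1
    obtain ⟨hq₁, hq₂, hq₃⟩ := hP q hq.1
    refine hf.2 _ _ (hseg p hp.1) (hseg q hq.1) (fun h => hpq ?_) (hp.2.trans hq.2.symm)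
    obtain ⟨h₁, h₂⟩ := arc_injective hp₁ hq₁ hp₂ (by omega) hq₂ (by omega) h
    exact Prod.ext h₁ h₂
  calc ((n : ℝ) + 1) * ∑ ℓ ∈ Finset.Icc 1 K, ((ℓ : ℝ) + 1)⁻¹
      = ∑ p ∈ P, ((p.2 : ℝ) + 1)⁻¹ := by simp [P, Finset.sum_product]
    _ = ∑ c ∈ Finset.Icc 1 m, ∑ p ∈ P with f (arc n p.1 p.2) = c, ((p.2 : ℝ) + 1)⁻¹ :=
        (Finset.sum_fiberwise_of_maps_to hcol _).symm
    _ ≤ ∑ c ∈ Finset.Icc 1 m, (1 : ℝ) := Finset.sum_le_sum hclass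
    _ = m := by simp

theorem exists_isProperColouring_of_arcColouring {α : Type*} (S : Finset α) (g : ℕ → ℕ → α)
    (hg : ∀ a ℓ, a ≤ n → 1 ≤ ℓ → ℓ ≤ n → g a ℓ ∈ S)
    (hsep : ∀ a ℓ c ℓ', a ≤ n → 1 ≤ ℓ → ℓ ≤ n → c ≤ n → 1 ≤ ℓ' → ℓ' ≤ n →
      (a, ℓ) ≠ (c, ℓ') → g a ℓ = g c ℓ' → CSegSeparated n (arc n a ℓ) (arc n c ℓ')) :
    ∃ f, IsProperColouringCyclo n S.card f := by
  classical
  choose! st len hst using fun X (hX : IsCSegSet n X) => isCSegSet_iff.1 hX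
  let f : Finset ℕ → ℕ := fun X =>
    if h : g (st X) (len X) ∈ S then (S.equivFin ⟨_, h⟩ : ℕ) + 1 else 0
  have hfX : ∀ X, IsCSegSet n X →
      ∃ h : g (st X) (len X) ∈ S, f X = (S.equivFin ⟨_, h⟩ : ℕ) + 1 := fun X hX =>
    have h := hg _ _ (hst X hX).1 (hst X hX).2.1 (hst X hX).2.2.1
    ⟨h, dif_pos h⟩
  refine ⟨f, fun X hX => ?_, fun X Y hX hY hXY hfXY => ?_⟩
  · obtain ⟨h, hf⟩ := hfX X hX
    rw [hf, Finset.mem_Icc]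
    exact ⟨Nat.le_add_left _ _, (S.equivFin ⟨_, h⟩).isLt⟩
  · obtain ⟨hXS, hX'⟩ := hfX X hX
    obtain ⟨hYS, hY'⟩ := hfX Y hY
    obtain ⟨ha, hℓ, hℓn, hXa⟩ := hst X hX
    obtain ⟨hc, hℓ', hℓ'n, hYa⟩ := hst Y hY
    rw [hX', hY', Nat.add_right_cancel_iff, Fin.val_inj, Equiv.apply_eq_iff_eq,
      Subtype.mk.injEq] at hfXY
    have hpair : (st X, len X) ≠ (st Y, len Y) := fun h => hXY <| by
      obtain ⟨h₁, h₂⟩ := Prod.mk.inj h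
      rw [hXa, hYa, h₁, h₂]
    rw [hXa, hYa]
    exact hsep _ _ _ _ ha hℓ hℓn hc hℓ' hℓ'n hpair hfXY

lemma cSegSeparated_arc_of_lt (hac : a < c) (hc : c ≤ n) (hℓ : 1 ≤ ℓ) (hℓn : ℓ ≤ n)
    (hca : c ≤ a + ℓ) : CSegSeparated n (arc n a ℓ) (arc n c ℓ) := by
  refine (cSegSeparated_arc_iff (by omega) hc hℓ hℓn hℓ hℓn).2 ⟨hac.ne, Or.inl ?_⟩
  rw [ArcPrecedes, gap_eq_ite (by omega) hc, if_pos hac.le]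
  omega

lemma lt_add_of_div_eq {k : ℕ} (hk : 0 < k) (h : a / k = c / k) : c < a + k :=
  calc c < c / k * k + k := Nat.lt_div_mul_add hk
    _ = a / k * k + k := by rw [h]
    _ ≤ a + k := Nat.add_le_add_right (Nat.div_mul_le_self a k) k

/-- Arcs of equal length `ℓ` whose starts lie in the same block `[j (ℓ + 1), j (ℓ + 1) + ℓ]`
are separated, so they may share a colour. -/
theorem exists_isProperColouring_blocks :
    ∃ f, IsProperColouringCyclo n (∑ ℓ ∈ Finset.Icc 1 n, (n / (ℓ + 1) + 1)) f := by
  have := exists_isProperColouring_of_arcColouring (n := n)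
    ((Finset.Icc 1 n).sigma fun ℓ => Finset.range (n / (ℓ + 1) + 1))
    (fun a ℓ => (⟨ℓ, a / (ℓ + 1)⟩ : Σ _ : ℕ, ℕ)) ?_ ?_
  · simpa using this
  · intro a ℓ ha hℓ hℓn
    simpa [hℓ, hℓn, Nat.lt_succ_iff] using Nat.div_le_div_right ha
  · intro a ℓ c ℓ' ha hℓ hℓn hc _ _ hne hg
    simp only [Sigma.mk.injEq, heq_eq_eq] at hg
    obtain ⟨rfl, hdiv⟩ := hg
    have hac : a ≠ c := fun h => hne (by rw [h])
    rcases hac.lt_or_gt with hlt | hlt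
    · exact cSegSeparated_arc_of_lt hlt hc hℓ hℓn
        (by have := lt_add_of_div_eq ℓ.succ_pos hdiv; omega)
    · exact (cSegSeparated_arc_of_lt hlt ha hℓ hℓn
        (by have := lt_add_of_div_eq ℓ.succ_pos hdiv.symm; omega)).symm

theorem cycloChromatic_le_sum : cycloChromatic n ≤ ∑ ℓ ∈ Finset.Icc 1 n, (n / (ℓ + 1) + 1) :=
  Nat.sInf_le exists_isProperColouring_blocks

lemma exists_isProperColouring_cycloChromatic :
    ∃ f, IsProperColouringCyclo n (cycloChromatic n) f :=
  Nat.sInf_mem (s := {m | ∃ f, IsProperColouringCyclo n m f}) ⟨_, exists_isProperColouring_blocks⟩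

lemma sum_Icc_inv_add_one (K : ℕ) :
    ∑ ℓ ∈ Finset.Icc 1 K, ((ℓ : ℝ) + 1)⁻¹ = harmonic (K + 1) - 1 := by
  induction K with
  | zero => simp
  | succ K ih =>
    rw [Finset.sum_Icc_succ_top (by omega), ih, harmonic_succ (K + 1)]
    push_cast
    ring

theorem cycloChromatic_le_mul_log :
    (cycloChromatic n : ℝ) ≤ n * Real.log (n + 1) + n := by
  have hsum : ((∑ ℓ ∈ Finset.Icc 1 n, (n / (ℓ + 1) + 1) : ℕ) : ℝ)
      ≤ n * ∑ ℓ ∈ Finset.Icc 1 n, ((ℓ : ℝ) + 1)⁻¹ + n := by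
    push_cast
    rw [Finset.sum_add_distrib, Finset.mul_sum]
    gcongr with ℓ
    · exact (Nat.cast_div_le).trans_eq (by push_cast; ring)
    · simp
  have hlog : (harmonic (n + 1) : ℝ) ≤ 1 + Real.log (n + 1) := by
    exact_mod_cast harmonic_le_one_add_log (n + 1)
  calc (cycloChromatic n : ℝ) ≤ ((∑ ℓ ∈ Finset.Icc 1 n, (n / (ℓ + 1) + 1) : ℕ) : ℝ) :=
        Nat.cast_le.2 cycloChromatic_le_sum
    _ ≤ n * (harmonic (n + 1) - 1 : ℝ) + n := by rwa [← sum_Icc_inv_add_one]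
    _ ≤ n * Real.log (n + 1) + n := by gcongr; linarith

theorem mul_log_le_cycloChromatic (hn : 3 ≤ n) :
    ((n : ℝ) + 1) * (Real.log (n / 3) - 1) ≤ cycloChromatic n := by
  obtain ⟨f, hf⟩ := exists_isProperColouring_cycloChromatic (n := n)
  have hK : 3 * (n / 3) ≤ n := Nat.mul_div_le n 3
  refine le_trans ?_ (mul_sum_inv_le_of_isProperColouring hf hK)
  rw [sum_Icc_inv_add_one]
  gcongr
  calc Real.log (n / 3) ≤ Real.log ↑(n / 3 + 1 + 1) := by
        refine Real.log_le_log (by positivity) ?_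
        rw [div_le_iff₀ (by norm_num)]
        exact_mod_cast (by omega : n ≤ (n / 3 + 1 + 1) * 3)
    _ ≤ harmonic (n / 3 + 1) := log_add_one_le_harmonic _

open Real in
lemma le_cycloChromatic_div_mul_log (hn : 3 ≤ n) :
    (1 + 1 / (n : ℝ)) * (1 + -(log 3 + 1) / log n) ≤ cycloChromatic n / (n * log n) := by
  have hn0 : (0 : ℝ) < n := by positivity
  have hlog : 0 < log n := log_pos (by exact_mod_cast (by omega : 1 < n))
  calc (1 + 1 / (n : ℝ)) * (1 + -(log 3 + 1) / log n)
      = ((n : ℝ) + 1) * (log (n / 3) - 1) / (n * log n) := by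
        rw [log_div hn0.ne' (by norm_num)]
        field_simp
        ring
    _ ≤ cycloChromatic n / (n * log n) := by
        gcongr
        exact mul_log_le_cycloChromatic hn

open Real in
lemma cycloChromatic_div_mul_log_le (hn : 3 ≤ n) :
    cycloChromatic n / (n * log n) ≤ 1 + (log (n + 1) - log n + 1) / log n := by
  have hn0 : (0 : ℝ) < n := by positivity
  have hlog : 0 < log n := log_pos (by exact_mod_cast (by omega : 1 < n))
  calc (cycloChromatic n : ℝ) / (n * log n) ≤ (n * log (n + 1) + n) / (n * log n) := by
        gcongr
        exact cycloChromatic_le_mul_log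
    _ = 1 + (log (n + 1) - log n + 1) / log n := by
        field_simp
        ring

open Filter Topology in
lemma tendsto_one_add_div_log {c : ℕ → ℝ} {c₀ : ℝ} (hc : Tendsto c atTop (𝓝 c₀)) :
    Tendsto (fun n : ℕ => 1 + c n / Real.log n) atTop (𝓝 1) := by
  have hlog : Tendsto (fun n : ℕ => (Real.log n)⁻¹) atTop (𝓝 0) :=
    tendsto_inv_atTop_zero.comp (Real.tendsto_log_atTop.comp tendsto_natCast_atTop_atTop)
  simpa [div_eq_mul_inv] using tendsto_const_nhds.add (hc.mul hlog)

end Cyclo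

open Cyclo Filter Topology Real in
/-- Corollary: `γ_n ∼ n ln n`, i.e. `γ_n / (n ln n) → 1` as `n → ∞`. -/
theorem cycloChromatic_asymptotic :
    Filter.Tendsto (fun n : ℕ => (cycloChromatic n : ℝ) / ((n : ℝ) * Real.log n))
      Filter.atTop (nhds 1) := by
  have hlow : Tendsto (fun n : ℕ => (1 + 1 / (n : ℝ)) * (1 + -(log 3 + 1) / log n)) atTop
      (𝓝 1) := by
    simpa using (tendsto_const_nhds.add tendsto_one_div_atTop_nhds_zero_nat).mul
      (tendsto_one_add_div_log (tendsto_const_nhds (x := -(log 3 + 1))))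
  have hup : Tendsto (fun n : ℕ => 1 + (log (n + 1) - log n + 1) / log n) atTop (𝓝 1) :=
    tendsto_one_add_div_log (tendsto_log_nat_add_one_sub_log.add_const 1)
  exact tendsto_of_tendsto_of_tendsto_of_le_of_le' hlow hup
    (eventually_atTop.2 ⟨3, fun n hn => le_cycloChromatic_div_mul_log hn⟩)
    (eventually_atTop.2 ⟨3, fun n hn => cycloChromatic_div_mul_log_le hn⟩)
end
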